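/- arXiv:2109.02180 — 6 statements merged into one kernel-verified Lean document; each statement's English description precedes it below -/
import Mathlib

section
/- Let $(X,\sigma)$ be a one-sided subshift and $\{\log f_n\}$ a sequence with $\{\log(e^C f_n)\}$ subadditive for some $C \ge 0$, having tempered variation. Suppose (i) there exists $h\in C(X)$ with $\lim_{n\to\infty}\frac1n \log(f_n(x)/e^{(S_n h)(x)})=0$ for every periodic point $x$ of $\sigma$; and (ii) there exist $k,N \in \mathbb{N}$ and positive reals $M_n$ with $\frac1n\log M_n \to 0$ such that for every word $u \in B_n(X)$ with $n\ge N$ there exist $0\le q\le k$ and a word $w$ of length $q$ such that $z:=(uw)^\infty \in X$ and $f_{j(n+q)}(z) \ge (M_n \sup\{f_n(x): x\in [u]\})^j$ for every $j\in\mathbb{N}$. Then $\lim_{n\to\infty}\frac1n\|\log(f_n/e^{S_n h})\|_\infty = 0$; in particular $\{\log f_n\}$ is asymptotically additive on $X$. -/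
open Filter Topology MeasureTheory

/-- The shift map on the full one-sided shift on `k` symbols. -/
def shiftMap {k : ℕ} : (ℕ → Fin k) → (ℕ → Fin k) := fun x n => x (n + 1)

/-- A one-sided subshift: a closed, shift-invariant subset of the full shift. -/
def IsSubshift {k : ℕ} (X : Set (ℕ → Fin k)) : Prop :=
  IsClosed X ∧ ∀ x ∈ X, shiftMap x ∈ X

/-- Birkhoff sum `S_n h = ∑_{i<n} h ∘ T^i`. -/
noncomputable def birk {α : Type*} (T : α → α) (h : α → ℝ) (n : ℕ) (x : α) : ℝ :=
  ∑ i ∈ Finset.range n, h (T^[i] x)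

/-- The word `u` of length `n` appears in (is allowable for) the subshift `X`. -/
def WordIn {k : ℕ} (X : Set (ℕ → Fin k)) {n : ℕ} (u : Fin n → Fin k) : Prop :=
  ∃ x ∈ X, ∀ i : Fin n, x (i : ℕ) = u i

/-- The cylinder set of the word `u` inside the subshift `X`. -/
def cylSet {k : ℕ} (X : Set (ℕ → Fin k)) {n : ℕ} (u : Fin n → Fin k) : Set X :=
  {x : X | ∀ i : Fin n, (x : ℕ → Fin k) (i : ℕ) = u i}

/-- The periodic sequence `(u)^∞` obtained by repeating the word `u`. -/
def periodize {k p : ℕ} (hp : 0 < p) (u : Fin p → Fin k) : ℕ → Fin k :=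
  fun i => u ⟨i % p, Nat.mod_lt i hp⟩

/-- A sequence `{log f_n}` is asymptotically additive on the subshift `X` (with shift `σ`)
if for every `ε > 0` there is a continuous `ρ` with
`limsup_n (1/n)‖log f_n - S_n ρ‖_∞ < ε`. -/
def AsympAdd {k : ℕ} (X : Set (ℕ → Fin k)) (σ : X → X) (f : ℕ → X → ℝ) : Prop :=
  ∀ ε : ℝ, 0 < ε → ∃ ρ : X → ℝ, Continuous ρ ∧
    Filter.limsup
      (fun n : ℕ => (1 / (n : ℝ)) * ⨆ x : X, |Real.log (f n x) - birk σ ρ n x|)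
      Filter.atTop < ε

lemma cyl_mem_nhds {k : ℕ} (c : ℕ → Fin k) (m : ℕ) :
    {y : ℕ → Fin k | ∀ i < m, y i = c i} ∈ 𝓝 c := by
  rw [nhds_pi, Filter.mem_pi']
  refine ⟨Finset.range m, fun i => {c i}, fun i => ?_, fun y hy i hi => ?_⟩
  · simp
  · have := hy i (by simp [hi])
    simpa using this

lemma exists_cyl_subset {k : ℕ} (x : ℕ → Fin k) (U : Set (ℕ → Fin k)) (hU : U ∈ 𝓝 x) :
    ∃ m, ∀ y, (∀ i < m, y i = x i) → y ∈ U := by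
  rw [nhds_pi, Filter.mem_pi'] at hU
  obtain ⟨I, t, ht, hsub⟩ := hU
  refine ⟨(I.sup id) + 1, fun y hy => hsub fun i hi => ?_⟩
  have hiv : (i : ℕ) ≤ I.sup id := by simpa using Finset.le_sup (f := id) hi
  have : y i = x i := hy i (by omega)
  rw [this]; exact mem_of_mem_nhds (ht i)

theorem stmt4 {k : ℕ} (X : Set (ℕ → Fin k)) (hX : IsSubshift X)
    (σ : X → X) (hσ : ∀ x : X, (σ x : ℕ → Fin k) = shiftMap (x : ℕ → Fin k))
    (f : ℕ → X → ℝ) (hfc : ∀ n, Continuous (f n)) (hfpos : ∀ n x, 0 < f n x)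
    -- (C1): {log (e^C f_n)} is subadditive for some C ≥ 0
    (C : ℝ) (hC : 0 ≤ C)
    (hsub : ∀ n m x, f (n + m) x ≤ Real.exp C * f n x * f m (σ^[n] x))
    -- tempered variation
    (Mv : ℕ → ℝ) (hMv : ∀ n, 0 < Mv n)
    (hMvlim : Tendsto (fun n : ℕ => (1 / (n : ℝ)) * Real.log (Mv n)) atTop (𝓝 0))
    (htv : ∀ (n : ℕ) (x y : X), (∀ i < n, (x : ℕ → Fin k) i = (y : ℕ → Fin k) i) →
      f n x ≤ Mv n * f n y)
    -- (i): convergence at every periodic point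
    (h : X → ℝ) (hh : Continuous h)
    (hper : ∀ x : X, (∃ p, 0 < p ∧ σ^[p] x = x) →
      Tendsto (fun n : ℕ => (1 / (n : ℝ)) * Real.log (f n x / Real.exp (birk σ h n x)))
        atTop (𝓝 0))
    -- (ii): the periodic-point property for words
    (k₀ N : ℕ) (M : ℕ → ℝ) (hM : ∀ n, 0 < M n)
    (hMlim : Tendsto (fun n : ℕ => (1 / (n : ℝ)) * Real.log (M n)) atTop (𝓝 0))
    (hP : ∀ n, N ≤ n → ∀ u : Fin n → Fin k, WordIn X u →
      ∃ q, q ≤ k₀ ∧ ∃ w : Fin q → Fin k, ∃ hpos : 0 < n + q,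
        ∃ hz : periodize hpos (Fin.append u w) ∈ X,
          ∀ j : ℕ, 0 < j →
            (M n * sSup ((f n) '' cylSet X u)) ^ j ≤
              f (j * (n + q)) ⟨periodize hpos (Fin.append u w), hz⟩) :
    Tendsto
      (fun n : ℕ => (1 / (n : ℝ)) * ⨆ x : X, |Real.log (f n x / Real.exp (birk σ h n x))|)
      atTop (𝓝 0) ∧ AsympAdd X σ f := by
  have hrw : ∀ (n : ℕ) (x : X), Real.log (f n x / Real.exp (birk σ h n x))
      = Real.log (f n x) - birk σ h n x := fun n x => by
    rw [Real.log_div (hfpos n x).ne' (Real.exp_ne_zero _), Real.log_exp]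
  -- empty case
  by_cases hne : Nonempty X
  swap
  · haveI : IsEmpty X := not_nonempty_iff.mp hne
    have hz : ∀ (g : X → ℝ), (⨆ x : X, g x) = 0 := fun g => Real.iSup_of_isEmpty g
    constructor
    · have : (fun n : ℕ => (1 / (n : ℝ)) * ⨆ x : X, |Real.log (f n x / Real.exp (birk σ h n x))|)
          = fun _ => (0:ℝ) := by
        funext n; rw [hz]; ring
      rw [this]; exact tendsto_const_nhds
    · intro ε hε
      refine ⟨h, hh, ?_⟩
      have : (fun n : ℕ => (1 / (n : ℝ)) * ⨆ x : X, |Real.log (f n x) - birk σ h n x|)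
          = fun _ => (0:ℝ) := by funext n; rw [hz]; ring
      rw [this, Filter.limsup_const]
      exact hε
  -- nonempty case
  haveI := hne
  haveI : CompactSpace X := isCompact_iff_compactSpace.mp hX.1.isCompact
  -- coordinates of iterates
  have iter_coord : ∀ (m : ℕ) (x : X) (i : ℕ),
      ((σ^[m] x : X) : ℕ → Fin k) i = (x : ℕ → Fin k) (i + m) := by
    intro m
    induction m with
    | zero => intro x i; simp
    | succ m ih =>
      intro x i
      rw [Function.iterate_succ_apply', hσ (σ^[m] x)]
      show ((σ^[m] x : X) : ℕ → Fin k) (i + 1) = _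
      rw [ih x (i+1)]
      exact congrArg _ (by omega)
  -- Birkhoff additivity
  have birk_add : ∀ (a b : ℕ) (x : X),
      birk σ h (a + b) x = birk σ h a x + birk σ h b (σ^[a] x) := by
    intro a b x
    unfold birk
    rw [Finset.sum_range_add]
    congr 1
    refine Finset.sum_congr rfl fun i _ => ?_
    rw [← Function.iterate_add_apply, Nat.add_comm i a]
  -- bound for |h|
  obtain ⟨D, hD0, hDb⟩ : ∃ D, 0 ≤ D ∧ ∀ x : X, |h x| ≤ D := by
    obtain ⟨B, hB⟩ := (isCompact_range (continuous_abs.comp hh)).bddAbove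
    exact ⟨max B 0, le_max_right _ _, fun x => le_trans (hB ⟨x, rfl⟩) (le_max_left _ _)⟩
  -- bound for log f q, q ≤ k₀
  obtain ⟨K, hK0, hKb⟩ : ∃ K, 0 ≤ K ∧ ∀ q ≤ k₀, ∀ x : X, Real.log (f q x) ≤ K := by
    have hKq : ∀ q : ℕ, ∃ Kq, ∀ x : X, Real.log (f q x) ≤ Kq := fun q => by
      obtain ⟨B, hB⟩ := (isCompact_range ((hfc q).log (fun x => (hfpos q x).ne'))).bddAbove
      exact ⟨B, fun x => hB ⟨x, rfl⟩⟩
    choose Kf hKf using hKq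
    have hnr : ((Finset.range (k₀+1)).image Kf).Nonempty :=
      ⟨Kf 0, Finset.mem_image_of_mem _ (by simp)⟩
    refine ⟨max 0 (((Finset.range (k₀+1)).image Kf).max' hnr), le_max_left _ _,
      fun q hq x => ?_⟩
    refine le_trans (hKf q x) (le_trans ?_ (le_max_right _ _))
    exact Finset.le_max' _ _ (Finset.mem_image_of_mem _ (Finset.mem_range.2 (by omega)))
  -- bound for f n
  have hBf : ∀ n : ℕ, ∃ B, ∀ x : X, f n x ≤ B := fun n => by
    obtain ⟨B, hB⟩ := (isCompact_range (hfc n)).bddAbove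
    exact ⟨B, fun x => hB ⟨x, rfl⟩⟩
  choose Bf hBfb using hBf
  -- uniform continuity of h
  have ucont : ∀ ε : ℝ, 0 < ε → ∃ m : ℕ, ∀ x y : X,
      (∀ i < m, (x : ℕ → Fin k) i = (y : ℕ → Fin k) i) → |h x - h y| ≤ ε := by
    intro ε hε
    have hUx : ∀ x : X, ∃ m, ∀ y : X,
        (∀ i < m, (y : ℕ → Fin k) i = (x : ℕ → Fin k) i) → |h y - h x| < ε/2 := by
      intro x
      have hball : h ⁻¹' Metric.ball (h x) (ε/2) ∈ 𝓝 x :=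
        hh.continuousAt.preimage_mem_nhds (Metric.ball_mem_nhds _ (by positivity))
      rw [mem_nhds_subtype] at hball
      obtain ⟨V, hV, hVsub⟩ := hball
      obtain ⟨m, hm⟩ := exists_cyl_subset (x : ℕ → Fin k) V hV
      refine ⟨m, fun y hy => ?_⟩
      have : (y : X) ∈ h ⁻¹' Metric.ball (h x) (ε/2) := hVsub (hm (y : ℕ → Fin k) hy)
      simpa [Metric.mem_ball, Real.dist_eq] using this
    choose mf hmf using hUx
    set U : X → Set X := fun x => {y : X | ∀ i < mf x, (y : ℕ → Fin k) i = (x : ℕ → Fin k) i}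
      with hU
    have hUnhds : ∀ x : X, U x ∈ 𝓝 x := by
      intro x
      have : U x = Subtype.val ⁻¹' {y : ℕ → Fin k | ∀ i < mf x, y i = (x : ℕ → Fin k) i} := rfl
      rw [this]
      exact continuous_subtype_val.continuousAt.preimage_mem_nhds
        (cyl_mem_nhds (x : ℕ → Fin k) (mf x))
    obtain ⟨t, -, htc⟩ := isCompact_univ.elim_nhds_subcover U (fun x _ => hUnhds x)
    refine ⟨t.sup mf, fun x y hxy => ?_⟩
    have hx : x ∈ ⋃ x₀ ∈ t, U x₀ := htc (Set.mem_univ x)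
    simp only [Set.mem_iUnion] at hx
    obtain ⟨x₀, hx₀t, hxU⟩ := hx
    have hyU : y ∈ U x₀ := by
      intro i hi
      have him : i < t.sup mf := lt_of_lt_of_le hi (Finset.le_sup hx₀t)
      rw [← hxy i him]
      exact hxU i hi
    have h1 := hmf x₀ x hxU
    have h2 := hmf x₀ y hyU
    have := abs_sub_abs_le_abs_sub (h x - h x₀) (h y - h x₀)
    calc |h x - h y| = |(h x - h x₀) - (h y - h x₀)| := by ring_nf
      _ ≤ |h x - h x₀| + |h y - h x₀| := abs_sub _ _
      _ ≤ ε/2 + ε/2 := add_le_add h1.le h2.le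
      _ = ε := by ring
  have birk_cmp : ∀ (ε₁ : ℝ), 0 ≤ ε₁ → ∀ m : ℕ,
      (∀ x y : X, (∀ i < m, (x : ℕ → Fin k) i = (y : ℕ → Fin k) i) → |h x - h y| ≤ ε₁) →
      ∀ (n : ℕ) (x z : X), (∀ i < n, (x : ℕ → Fin k) i = (z : ℕ → Fin k) i) →
      |birk σ h n x - birk σ h n z| ≤ n * ε₁ + 2 * D * m := by
    intro ε₁ hε₁ m hm n x z hxz
    have hdiff : birk σ h n x - birk σ h n z
        = ∑ i ∈ Finset.range n, (h (σ^[i] x) - h (σ^[i] z)) := by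
      unfold birk; rw [Finset.sum_sub_distrib]
    rw [hdiff]
    have hterm : ∀ i ∈ Finset.range n,
        |h (σ^[i] x) - h (σ^[i] z)| ≤ ε₁ + (if i + m ≤ n then 0 else 2 * D) := by
      intro i hi
      rw [Finset.mem_range] at hi
      by_cases hc : i + m ≤ n
      · rw [if_pos hc, add_zero]
        apply hm
        intro j hj
        rw [iter_coord i x j, iter_coord i z j]
        exact hxz (j + i) (by omega)
      · rw [if_neg hc]
        have h1 := hDb (σ^[i] x)
        have h2 := hDb (σ^[i] z)
        have h3 := abs_sub (h (σ^[i] x)) (h (σ^[i] z))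
        linarith
    calc |∑ i ∈ Finset.range n, (h (σ^[i] x) - h (σ^[i] z))|
        ≤ ∑ i ∈ Finset.range n, |h (σ^[i] x) - h (σ^[i] z)| :=
          Finset.abs_sum_le_sum_abs _ _
      _ ≤ ∑ i ∈ Finset.range n, (ε₁ + (if i + m ≤ n then 0 else 2 * D)) :=
          Finset.sum_le_sum hterm
      _ = n * ε₁ + ∑ i ∈ Finset.range n, (if i + m ≤ n then 0 else 2 * D) := by
          rw [Finset.sum_add_distrib, Finset.sum_const, Finset.card_range, nsmul_eq_mul]
      _ ≤ n * ε₁ + 2 * D * m := by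
          have hsf : ∑ i ∈ Finset.range n, (if i + m ≤ n then (0:ℝ) else 2 * D)
              = ∑ i ∈ (Finset.range n).filter (fun i => ¬ (i + m ≤ n)), 2 * D := by
            rw [Finset.sum_filter]
            exact Finset.sum_congr rfl fun i _ => by rw [ite_not]
          have hcard : ((Finset.range n).filter (fun i => ¬ (i + m ≤ n))).card ≤ m := by
            have hsub : (Finset.range n).filter (fun i => ¬ (i + m ≤ n))
                ⊆ Finset.Ico (n - m) n := by
              intro i hi
              simp only [Finset.mem_filter, Finset.mem_range] at hi
              rw [Finset.mem_Ico]
              omega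
            calc ((Finset.range n).filter (fun i => ¬ (i + m ≤ n))).card
                ≤ (Finset.Ico (n - m) n).card := Finset.card_le_card hsub
              _ = n - (n - m) := Nat.card_Ico _ _
              _ ≤ m := by omega
          rw [hsf, Finset.sum_const, nsmul_eq_mul]
          have : (((Finset.range n).filter (fun i => ¬ (i + m ≤ n))).card : ℝ) ≤ (m : ℝ) :=
            Nat.cast_le.mpr hcard
          nlinarith
  -- key estimate
  have key : ∀ n : ℕ, N ≤ n → ∀ x : X, ∃ z : X,
      (∀ i < n, (z : ℕ → Fin k) i = (x : ℕ → Fin k) i) ∧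
      Real.log (f n x) - birk σ h n x
        ≤ (birk σ h n z - birk σ h n x) + k₀ * D - Real.log (M n) ∧
      (birk σ h n z - birk σ h n x) - (2 * C + K + k₀ * D) - Real.log (Mv n)
        ≤ Real.log (f n x) - birk σ h n x := by
    intro n hn x
    set u : Fin n → Fin k := fun i => (x : ℕ → Fin k) (i : ℕ) with hu
    have hword : WordIn X u := ⟨(x : ℕ → Fin k), x.2, fun i => rfl⟩
    obtain ⟨q, hq, w, hpos, hzmem, hineq⟩ := hP n hn u hword
    set p := n + q with hp
    set z : X := ⟨periodize hpos (Fin.append u w), hzmem⟩ with hzdef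
    -- agreement of z and x on first n coordinates
    have hagree : ∀ i < n, (z : ℕ → Fin k) i = (x : ℕ → Fin k) i := by
      intro i hi
      show periodize hpos (Fin.append u w) i = _
      unfold periodize
      have hip : i % p = i := Nat.mod_eq_of_lt (by omega)
      have hcast : (⟨i % p, Nat.mod_lt i hpos⟩ : Fin p) = Fin.castAdd q ⟨i, hi⟩ := by
        apply Fin.ext; simp [hip]
      rw [hcast, Fin.append_left]
    -- z is periodic with period p
    have hzfix : σ^[p] z = z := by
      apply Subtype.ext; funext i
      rw [iter_coord p z i]
      show periodize hpos (Fin.append u w) (i + p) = periodize hpos (Fin.append u w) i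
      unfold periodize
      congr 1
      apply Fin.ext
      simp [Nat.add_mod_right]
    -- cylinder membership
    have hxcyl : x ∈ cylSet X u := fun i => rfl
    have hzcyl : z ∈ cylSet X u := fun i => hagree i i.isLt
    set S := sSup ((f n) '' cylSet X u) with hS
    have hbdd : BddAbove ((f n) '' cylSet X u) := by
      refine ⟨Bf n, ?_⟩
      rintro _ ⟨y, -, rfl⟩
      exact hBfb n y
    have hxS : f n x ≤ S := le_csSup hbdd ⟨x, hxcyl, rfl⟩
    have hzS : f n z ≤ S := le_csSup hbdd ⟨z, hzcyl, rfl⟩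
    have hSpos : 0 < S := lt_of_lt_of_le (hfpos n x) hxS
    -- iterated Birkhoff sums at the periodic point
    have hbirkj : ∀ j : ℕ, birk σ h (j * p) z = j * birk σ h p z := by
      intro j
      induction j with
      | zero => simp [birk]
      | succ j ih =>
        have hfixj : σ^[j * p] z = z := by
          rw [Nat.mul_comm, Function.iterate_mul]
          exact Function.iterate_fixed hzfix j
        have : (j + 1) * p = j * p + p := by ring
        rw [this, birk_add (j * p) p z, hfixj, ih]
        push_cast
        ring
    -- limit at the periodic point
    have hp0 : (0:ℕ) < p := hpos
    have hperz' : Tendsto (fun m : ℕ => (1 / (m : ℝ)) * (Real.log (f m z) - birk σ h m z))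
        atTop (𝓝 0) := by
      refine (hper z ⟨p, hp0, hzfix⟩).congr fun m => by rw [hrw]
    have hjp : Tendsto (fun j : ℕ => j * p) atTop atTop :=
      Filter.tendsto_atTop_mono (f := id) (fun j => Nat.le_mul_of_pos_right j hp0) tendsto_id
    have hcomp : Tendsto (fun j : ℕ =>
        (1 / ((j * p : ℕ) : ℝ)) * (Real.log (f (j * p) z) - birk σ h (j * p) z))
        atTop (𝓝 0) := hperz'.comp hjp
    have Ltend : Tendsto (fun j : ℕ => (1 / (j : ℝ)) * Real.log (f (j * p) z))
        atTop (𝓝 (birk σ h p z)) := by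
      have h2 := hcomp.const_mul (p : ℝ)
      rw [mul_zero] at h2
      have h3 : Tendsto (fun j : ℕ => (1 / (j : ℝ)) * Real.log (f (j * p) z) - birk σ h p z)
          atTop (𝓝 0) := by
        apply h2.congr'
        filter_upwards [eventually_ge_atTop 1] with j hj
        have hj0 : ((j : ℝ)) ≠ 0 := Nat.cast_ne_zero.mpr (by omega)
        have hp0' : ((p : ℝ)) ≠ 0 := Nat.cast_ne_zero.mpr hp0.ne'
        rw [hbirkj j]
        push_cast
        field_simp
      have h4 := h3.add_const (birk σ h p z)
      simpa using h4
    -- upper estimate : log (M n * S) ≤ birk σ h p z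
    have upper1 : Real.log (M n) + Real.log S ≤ birk σ h p z := by
      rw [← Real.log_mul (hM n).ne' hSpos.ne']
      apply ge_of_tendsto Ltend
      filter_upwards [eventually_ge_atTop 1] with j hj
      have hj0 : (0:ℝ) < (j : ℝ) := by positivity
      have hMS : 0 < M n * S := mul_pos (hM n) hSpos
      have hlog : (j : ℝ) * Real.log (M n * S) ≤ Real.log (f (j * p) z) := by
        have := Real.log_le_log (pow_pos hMS j) (hineq j hj)
        rwa [Real.log_pow] at this
      calc Real.log (M n * S) = (1 / (j:ℝ)) * ((j:ℝ) * Real.log (M n * S)) := by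
            field_simp
        _ ≤ (1 / (j:ℝ)) * Real.log (f (j * p) z) := by
            apply mul_le_mul_of_nonneg_left hlog (by positivity)
    -- lower estimate : birk σ h p z ≤ C + log (f p z)
    have hL8 : ∀ j : ℕ, 1 ≤ j → f (j * p) z ≤ Real.exp ((j : ℝ) * C) * (f p z) ^ j := by
      intro j hj
      induction j with
      | zero => omega
      | succ j ih =>
        by_cases hj1 : 1 ≤ j
        · have hih := ih hj1
          have heq : (j + 1) * p = p + j * p := by ring
          have hstep := hsub p (j * p) z
          rw [hzfix] at hstep
          rw [heq]
          calc f (p + j * p) z ≤ Real.exp C * f p z * f (j * p) z := hstep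
            _ ≤ Real.exp C * f p z * (Real.exp ((j : ℝ) * C) * (f p z) ^ j) := by
                exact mul_le_mul_of_nonneg_left hih
                  (mul_nonneg (Real.exp_pos C).le (hfpos p z).le)
            _ = Real.exp (((j + 1 : ℕ) : ℝ) * C) * (f p z) ^ (j + 1) := by
                rw [show (((j + 1 : ℕ)) : ℝ) * C = (j : ℝ) * C + C by push_cast; ring,
                  Real.exp_add]
                ring
        · have hj0 : j = 0 := by omega
          subst hj0
          simp only [Nat.zero_add, one_mul, pow_one]
          have h1 : (1:ℝ) ≤ Real.exp ((1:ℕ) * C) := by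
            rw [Real.one_le_exp_iff]
            · positivity
          nlinarith [hfpos p z]
    have lower1 : birk σ h p z ≤ C + Real.log (f p z) := by
      apply le_of_tendsto Ltend
      filter_upwards [eventually_ge_atTop 1] with j hj
      have hj0 : (0:ℝ) < (j : ℝ) := by positivity
      have hlog : Real.log (f (j * p) z) ≤ (j:ℝ) * C + (j:ℝ) * Real.log (f p z) := by
        have h1 := Real.log_le_log (hfpos (j * p) z) (hL8 j hj)
        rwa [Real.log_mul (Real.exp_ne_zero _) (pow_ne_zero j (hfpos p z).ne'),
          Real.log_exp, Real.log_pow] at h1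
      calc (1/(j:ℝ)) * Real.log (f (j * p) z)
          ≤ (1/(j:ℝ)) * ((j:ℝ) * C + (j:ℝ) * Real.log (f p z)) :=
            mul_le_mul_of_nonneg_left hlog (by positivity)
        _ = C + Real.log (f p z) := by field_simp
    have hdecomp : birk σ h p z = birk σ h n z + birk σ h q (σ^[n] z) := birk_add n q z
    have hbq : |birk σ h q (σ^[n] z)| ≤ (k₀:ℝ) * D := by
      have e1 : birk σ h q (σ^[n] z) = ∑ i ∈ Finset.range q, h (σ^[i] (σ^[n] z)) := rfl
      rw [e1]
      refine le_trans (Finset.abs_sum_le_sum_abs _ _) ?_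
      calc ∑ i ∈ Finset.range q, |h (σ^[i] (σ^[n] z))|
          ≤ ∑ _i ∈ Finset.range q, D := Finset.sum_le_sum fun i _ => hDb _
        _ = (q:ℝ) * D := by rw [Finset.sum_const, Finset.card_range, nsmul_eq_mul]
        _ ≤ (k₀:ℝ) * D := mul_le_mul_of_nonneg_right (Nat.cast_le.mpr hq) hD0
    refine ⟨z, hagree, ?_, ?_⟩
    · have h1 : Real.log (f n x) ≤ Real.log S := Real.log_le_log (hfpos n x) hxS
      have h2 : birk σ h q (σ^[n] z) ≤ (k₀:ℝ) * D := le_trans (le_abs_self _) hbq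
      linarith [upper1, hdecomp]
    · have h3 : f p z ≤ Real.exp C * f n z * f q (σ^[n] z) := by
        have := hsub n q z
        rwa [← hp] at this
      have h4 : Real.log (f p z) ≤ C + Real.log (f n z) + Real.log (f q (σ^[n] z)) := by
        have h4' := Real.log_le_log (hfpos p z) h3
        rwa [Real.log_mul (mul_ne_zero (Real.exp_ne_zero C) (hfpos n z).ne') (hfpos q _).ne',
          Real.log_mul (Real.exp_ne_zero C) (hfpos n z).ne', Real.log_exp] at h4'
      have h5 : Real.log (f q (σ^[n] z)) ≤ K := hKb q hq _
      have h6 : f n z ≤ Mv n * f n x := htv n z x hagree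
      have h7 : Real.log (f n z) ≤ Real.log (Mv n) + Real.log (f n x) := by
        have h7' := Real.log_le_log (hfpos n z) h6
        rwa [Real.log_mul (hMv n).ne' (hfpos n x).ne'] at h7'
      have h8 : -((k₀:ℝ) * D) ≤ birk σ h q (σ^[n] z) := by
        have := neg_abs_le (birk σ h q (σ^[n] z))
        linarith
      linarith [lower1, hdecomp]
  -- final limit for the normalized sequence
  have main : Tendsto (fun n : ℕ => (1 / (n : ℝ)) *
      ⨆ x : X, |Real.log (f n x) - birk σ h n x|) atTop (𝓝 0) := by
    have hnonneg : ∀ n : ℕ, 0 ≤ (1 / (n : ℝ)) * ⨆ x : X, |Real.log (f n x) - birk σ h n x| :=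
      fun n => mul_nonneg (by positivity) (Real.iSup_nonneg fun x => abs_nonneg _)
    refine tendsto_order.2 ⟨fun a ha => Eventually.of_forall
      fun n => lt_of_lt_of_le ha (hnonneg n), fun b hb => ?_⟩
    obtain ⟨m, hm⟩ := ucont (b/4) (by positivity)
    have hRb : ∀ n : ℕ, N ≤ n → (⨆ x : X, |Real.log (f n x) - birk σ h n x|)
        ≤ (n : ℝ) * (b/4) + (2*D*(m:ℝ) + (2*C + K + (k₀:ℝ)*D))
          + |Real.log (M n)| + |Real.log (Mv n)| := by
      intro n hn
      refine ciSup_le fun x => ?_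
      obtain ⟨z, hag, hup, hlo⟩ := key n hn x
      have hcmp := birk_cmp (b/4) (by positivity) m hm n z x (fun i hi => hag i hi)
      have e1 := le_abs_self (birk σ h n z - birk σ h n x)
      have e2 := neg_abs_le (birk σ h n z - birk σ h n x)
      have e3 := le_abs_self (Real.log (M n))
      have e4 := neg_abs_le (Real.log (M n))
      have e5 := le_abs_self (Real.log (Mv n))
      have e6 := neg_abs_le (Real.log (Mv n))
      have e7 : |birk σ h n z - birk σ h n x| ≤ (n:ℝ) * (b/4) + 2*D*(m:ℝ) := hcmp
      have e8 : (0:ℝ) ≤ (k₀:ℝ) * D := mul_nonneg (Nat.cast_nonneg _) hD0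
      have e9 : (0:ℝ) ≤ 2*D*(m:ℝ) := by positivity
      have e10 : (0:ℝ) ≤ |Real.log (M n)| := abs_nonneg _
      have e11 : (0:ℝ) ≤ |Real.log (Mv n)| := abs_nonneg _
      rw [abs_le]
      constructor
      · linarith
      · linarith
    have hM' : Tendsto (fun n : ℕ => (1/(n:ℝ)) * |Real.log (M n)|) atTop (𝓝 0) := by
      have h1 := hMlim.abs
      rw [abs_zero] at h1
      refine h1.congr fun n => ?_
      rw [abs_mul, abs_of_nonneg (by positivity : (0:ℝ) ≤ 1/(n:ℝ))]
    have hMv' : Tendsto (fun n : ℕ => (1/(n:ℝ)) * |Real.log (Mv n)|) atTop (𝓝 0) := by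
      have h1 := hMvlim.abs
      rw [abs_zero] at h1
      refine h1.congr fun n => ?_
      rw [abs_mul, abs_of_nonneg (by positivity : (0:ℝ) ≤ 1/(n:ℝ))]
    have hc' : Tendsto (fun n : ℕ => (2*D*(m:ℝ) + (2*C + K + (k₀:ℝ)*D)) / (n:ℝ))
        atTop (𝓝 0) := tendsto_const_div_atTop_nhds_zero_nat _
    filter_upwards [eventually_ge_atTop N, eventually_ge_atTop 1,
      hM'.eventually_lt_const (show (0:ℝ) < b/4 by positivity),
      hMv'.eventually_lt_const (show (0:ℝ) < b/4 by positivity),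
      hc'.eventually_lt_const (show (0:ℝ) < b/4 by positivity)] with n hN h1n hMn hMvn hcn
    have hn0 : (0:ℝ) < (n:ℝ) := by exact_mod_cast Nat.lt_of_lt_of_le Nat.zero_lt_one h1n
    have hn0' : (n:ℝ) ≠ 0 := hn0.ne'
    have hsup := hRb n hN
    calc (1 / (n : ℝ)) * ⨆ x : X, |Real.log (f n x) - birk σ h n x|
        ≤ (1/(n:ℝ)) * ((n : ℝ) * (b/4) + (2*D*(m:ℝ) + (2*C + K + (k₀:ℝ)*D))
          + |Real.log (M n)| + |Real.log (Mv n)|) :=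
          mul_le_mul_of_nonneg_left hsup (by positivity)
      _ = b/4 + (2*D*(m:ℝ) + (2*C + K + (k₀:ℝ)*D)) / (n:ℝ)
          + (1/(n:ℝ)) * |Real.log (M n)| + (1/(n:ℝ)) * |Real.log (Mv n)| := by
          field_simp
      _ < b/4 + b/4 + b/4 + b/4 := by linarith
      _ = b := by ring
  have hfun : (fun n : ℕ => (1 / (n : ℝ)) *
      ⨆ x : X, |Real.log (f n x / Real.exp (birk σ h n x))|)
      = fun n : ℕ => (1 / (n : ℝ)) * ⨆ x : X, |Real.log (f n x) - birk σ h n x| := by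
    funext n
    simp only [hrw]
  constructor
  · rw [hfun]; exact main
  · intro ε hε
    exact ⟨h, hh, by rw [main.limsup_eq]; exact hε⟩
end

section
/- Let $(X,\sigma)$ be a one-sided subshift and $\{\log f_n\}$ a sequence of logarithms of continuous positive functions with bounded variation such that $\{\log(e^C f_n)\}$ is subadditive for some $C \ge 0$ and there exist $p \in \mathbb{N}$, $D > 0$ with: for all words $u \in B_n(X)$, $v \in B_m(X)$ there exist $0 \le k \le p$ and $w \in B_k(X)$ with $\sup\{f_{n+m+k}(x): x\in[uwv]\} \ge D \sup\{f_n(x):x\in[u]\}\sup\{f_m(x):x\in[v]\}$. If there exists $h \in C(X)$ with $\lim_{n\to\infty}\frac1n\log(f_n(x)/e^{(S_n h)(x)}) = 0$ for every $x \in X$ (pointwise), then $\lim_{n\to\infty}\frac1n\|\log(f_n/e^{S_n h})\|_\infty = 0$ (uniform convergence), so $\{\log f_n\}$ is asymptotically additive. -/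
open Filter Topology MeasureTheory

section Aux

/-- Birkhoff sums are additive along orbits. -/
lemma birk_add {α : Type*} (T : α → α) (h : α → ℝ) (a b : ℕ) (x : α) :
    birk T h (a + b) x = birk T h a x + birk T h b (T^[a] x) := by
  unfold birk
  rw [Finset.sum_range_add]
  congr 1
  refine Finset.sum_congr rfl fun i _ => ?_
  rw [← Function.iterate_add_apply, add_comm i a]

lemma birk_abs_le {α : Type*} (T : α → α) (h : α → ℝ) (q : ℕ) (x : α) (H : ℝ)
    (hH : ∀ y, |h y| ≤ H) : |birk T h q x| ≤ q * H := by
  unfold birk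
  refine (Finset.abs_sum_le_sum_abs _ _).trans ?_
  have := Finset.sum_le_card_nsmul (Finset.range q) (fun i => |h (T^[i] x)|) H
    (fun i _ => hH _)
  simpa [nsmul_eq_mul] using this

end Aux

set_option maxHeartbeats 2000000 in
theorem stmt6 {k : ℕ} (X : Set (ℕ → Fin k)) (hX : IsSubshift X)
    (σ : X → X) (hσ : ∀ x : X, (σ x : ℕ → Fin k) = shiftMap (x : ℕ → Fin k))
    (f : ℕ → X → ℝ) (hfc : ∀ n, Continuous (f n)) (hfpos : ∀ n x, 0 < f n x)
    -- bounded variation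
    (M : ℝ) (hMpos : 0 < M)
    (hbv : ∀ (n : ℕ) (x y : X), (∀ i < n, (x : ℕ → Fin k) i = (y : ℕ → Fin k) i) →
      f n x ≤ M * f n y)
    -- (C1): {log (e^C f_n)} is subadditive for some C ≥ 0
    (C : ℝ) (hC : 0 ≤ C)
    (hsub : ∀ n m x, f (n + m) x ≤ Real.exp C * f n x * f m (σ^[n] x))
    -- (C2): almost-multiplicativity along joined words
    (p : ℕ) (D : ℝ) (hD : 0 < D)
    (hC2 : ∀ (n m : ℕ) (u : Fin n → Fin k) (v : Fin m → Fin k), WordIn X u → WordIn X v →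
      ∃ q, q ≤ p ∧ ∃ w : Fin q → Fin k,
        D * sSup ((f n) '' cylSet X u) * sSup ((f m) '' cylSet X v) ≤
          sSup ((f (n + q + m)) '' cylSet X (Fin.append (Fin.append u w) v)))
    -- pointwise convergence
    (h : X → ℝ) (hh : Continuous h)
    (hpt : ∀ x : X,
      Tendsto (fun n : ℕ => (1 / (n : ℝ)) * Real.log (f n x / Real.exp (birk σ h n x)))
        atTop (𝓝 0)) :
    Tendsto
      (fun n : ℕ => (1 / (n : ℝ)) * ⨆ x : X, |Real.log (f n x / Real.exp (birk σ h n x))|)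
      atTop (𝓝 0) ∧ AsympAdd X σ f := by
  classical
  have hlog : ∀ (n : ℕ) (x : X),
      Real.log (f n x / Real.exp (birk σ h n x)) = Real.log (f n x) - birk σ h n x := by
    intro n x
    rw [Real.log_div (hfpos n x).ne' (Real.exp_ne_zero _), Real.log_exp]
  -- reduce AsympAdd to the first statement
  suffices hmain : Tendsto
      (fun n : ℕ => (1 / (n : ℝ)) * ⨆ x : X, |Real.log (f n x / Real.exp (birk σ h n x))|)
      atTop (𝓝 0) by
    refine ⟨hmain, fun ε hε => ⟨h, hh, ?_⟩⟩
    have hfun : (fun n : ℕ => (1 / (n : ℝ)) * ⨆ x : X, |Real.log (f n x) - birk σ h n x|)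
        = fun n : ℕ => (1 / (n : ℝ)) * ⨆ x : X, |Real.log (f n x / Real.exp (birk σ h n x))| := by
      funext n
      congr 1
      exact iSup_congr fun x => by rw [hlog]
    rw [hfun, hmain.limsup_eq]
    exact hε
  rcases isEmpty_or_nonempty X with hemp | hne
  · have hfun : (fun n : ℕ => (1 / (n : ℝ)) *
        ⨆ x : X, |Real.log (f n x / Real.exp (birk σ h n x))|) = fun _ : ℕ => (0 : ℝ) := by
      funext n
      rw [Real.iSup_of_isEmpty]
      ring
    rw [hfun]
    exact tendsto_const_nhds
  -- main case: X nonempty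
  have key : ∀ ε : ℝ, 0 < ε → ∃ K : ℝ, 0 ≤ K ∧ ∀ n : ℕ, 1 ≤ n → ∀ y : X,
      |Real.log (f n y) - birk σ h n y| ≤ n * ε + K := by
    intro ε hε
    haveI : CompactSpace X := isCompact_iff_compactSpace.mp hX.1.isCompact
    -- bound on |h|
    obtain ⟨H, hH0, hHb⟩ : ∃ H : ℝ, 0 ≤ H ∧ ∀ x : X, |h x| ≤ H := by
      obtain ⟨B, hB⟩ := (isCompact_range hh.abs).bddAbove
      exact ⟨max B 0, le_max_right _ _,
        fun x => le_trans (hB (Set.mem_range_self x)) (le_max_left _ _)⟩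
    -- bound on f q for q ≤ p
    obtain ⟨F, hF1, hFb⟩ : ∃ F : ℝ, 1 ≤ F ∧ ∀ q ≤ p, ∀ x : X, f q x ≤ F := by
      have hB : ∀ q : ℕ, ∃ B : ℝ, ∀ x : X, f q x ≤ B := by
        intro q
        obtain ⟨B, hB⟩ := (isCompact_range (hfc q)).bddAbove
        exact ⟨B, fun x => hB (Set.mem_range_self x)⟩
      choose B hBs using hB
      refine ⟨1 + ∑ q ∈ Finset.range (p+1), |B q|,
        by have := Finset.sum_nonneg (fun r (_ : r ∈ Finset.range (p+1)) => abs_nonneg (B r))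
           linarith, fun q hq x => ?_⟩
      have h1 : f q x ≤ |B q| := le_trans (hBs q x) (le_abs_self _)
      have h2 : |B q| ≤ ∑ r ∈ Finset.range (p+1), |B r| :=
        Finset.single_le_sum (fun r _ => abs_nonneg (B r))
          (Finset.mem_range.mpr (Nat.lt_succ_of_le hq))
      linarith
    have hM1 : 1 ≤ M := by
      obtain ⟨x₀⟩ := hne
      have := hbv 0 x₀ x₀ (by intro i hi; rfl)
      exact (le_mul_iff_one_le_left (hfpos 0 x₀)).mp this
    have hlogM : 0 ≤ Real.log M := Real.log_nonneg hM1
    have hlogF : 0 ≤ Real.log F := Real.log_nonneg hF1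
    -- uniform continuity of h w.r.t. cylinders
    obtain ⟨m, hm⟩ : ∃ m : ℕ, ∀ x y : X,
        (∀ i < m, (x : ℕ → Fin k) i = (y : ℕ → Fin k) i) → |h x - h y| ≤ ε := by
      have hloc : ∀ x : X, ∃ nx : ℕ, ∀ y : X,
          (∀ i < nx, (y : ℕ → Fin k) i = (x : ℕ → Fin k) i) → |h y - h x| ≤ ε / 2 := by
        intro x
        have hcont : {y : X | |h y - h x| < ε/2} ∈ 𝓝 x := by
          have hco : Continuous fun y : X => |h y - h x| := (hh.sub continuous_const).abs
          have hopen : IsOpen {y : X | |h y - h x| < ε/2} :=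
            isOpen_lt hco continuous_const
          refine hopen.mem_nhds ?_
          simp only [Set.mem_setOf_eq, sub_self, abs_zero]
          linarith
        rw [nhds_subtype] at hcont
        obtain ⟨t, ht, hsub'⟩ := Filter.mem_comap.mp hcont
        obtain ⟨c, ⟨zc, nz, rfl⟩, hxc, hct⟩ :=
          (PiNat.isTopologicalBasis_cylinders (fun _ : ℕ => Fin k)).mem_nhds_iff.mp ht
        refine ⟨nz, fun y hy => le_of_lt (hsub' (hct ?_))⟩
        rw [← PiNat.mem_cylinder_iff_eq.mp hxc]
        exact PiNat.mem_cylinder_iff.mpr (fun i hi => hy i hi)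
      choose nd hnd using hloc
      have hUopen : ∀ x : X,
          {y : X | ∀ i < nd x, (y : ℕ → Fin k) i = (x : ℕ → Fin k) i} ∈ 𝓝 x := by
        intro x
        have heq : {y : X | ∀ i < nd x, (y : ℕ → Fin k) i = (x : ℕ → Fin k) i}
            = Subtype.val ⁻¹' (PiNat.cylinder (x : ℕ → Fin k) (nd x)) := by
          ext y
          exact Iff.symm PiNat.mem_cylinder_iff
        rw [heq]
        exact ((PiNat.isOpen_cylinder (fun _ : ℕ => Fin k) _ _).preimage
          continuous_subtype_val).mem_nhds (PiNat.self_mem_cylinder _ _)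
      obtain ⟨t, -, hcov⟩ := isCompact_univ.elim_nhds_subcover
        (fun x => {y : X | ∀ i < nd x, (y : ℕ → Fin k) i = (x : ℕ → Fin k) i})
        (fun x _ => hUopen x)
      refine ⟨t.sup nd, fun x y hxy => ?_⟩
      have hx := hcov (Set.mem_univ x)
      simp only [Set.mem_iUnion, Set.mem_setOf_eq] at hx
      obtain ⟨c, hct, hc⟩ := hx
      have hndc : nd c ≤ t.sup nd := Finset.le_sup hct
      have h1 : |h x - h c| ≤ ε / 2 := hnd c x hc
      have h2 : |h y - h c| ≤ ε / 2 := by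
        refine hnd c y fun i hi => ?_
        rw [← hxy i (lt_of_lt_of_le hi hndc)]
        exact hc i hi
      calc |h x - h y| = |(h x - h c) - (h y - h c)| := by ring_nf
        _ ≤ |h x - h c| + |h y - h c| := abs_sub _ _
        _ ≤ ε := by linarith
    -- variation of Birkhoff sums on cylinders
    have hcoord : ∀ (i : ℕ) (x : X) (j : ℕ),
        ((σ^[i] x : X) : ℕ → Fin k) j = (x : ℕ → Fin k) (j + i) := by
      intro i
      induction i with
      | zero => intro x j; rfl
      | succ i ih =>
        intro x j
        rw [Function.iterate_succ_apply, ih (σ x) j, hσ x]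
        show (x : ℕ → Fin k) (j + i + 1) = (x : ℕ → Fin k) (j + (i + 1))
        congr 1
    have hvar : ∀ (n : ℕ) (x y : X), (∀ i < n, (x:ℕ→Fin k) i = (y:ℕ→Fin k) i) →
        |birk σ h n x - birk σ h n y| ≤ n * ε + 2*H*m := by
      intro n x y hxy
      have hdiff : birk σ h n x - birk σ h n y
          = ∑ i ∈ Finset.range n, (h (σ^[i] x) - h (σ^[i] y)) := by
        unfold birk; rw [Finset.sum_sub_distrib]
      rw [hdiff]
      refine (Finset.abs_sum_le_sum_abs _ _).trans ?_
      have hterm : ∀ i ∈ Finset.range n, |h (σ^[i] x) - h (σ^[i] y)|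
          ≤ ε + (if n < i + m then 2*H else 0) := by
        intro i hi
        rw [Finset.mem_range] at hi
        by_cases hcase : n < i + m
        · rw [if_pos hcase]
          have := abs_sub (h (σ^[i] x)) (h (σ^[i] y))
          have h1 := hHb (σ^[i] x)
          have h2 := hHb (σ^[i] y)
          calc |h (σ^[i] x) - h (σ^[i] y)| ≤ |h (σ^[i] x)| + |h (σ^[i] y)| := this
            _ ≤ 2*H := by linarith
            _ ≤ ε + 2*H := by linarith
        · rw [if_neg hcase, add_zero]
          push_neg at hcase
          refine hm _ _ fun l hl => ?_
          rw [hcoord i x l, hcoord i y l]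
          exact hxy (l + i) (by omega)
      refine (Finset.sum_le_sum hterm).trans ?_
      rw [Finset.sum_add_distrib, Finset.sum_const, Finset.card_range, nsmul_eq_mul]
      have hif : (∑ i ∈ Finset.range n, if n < i + m then 2*H else 0)
          ≤ 2*H*m := by
        have hsubs : (Finset.range n).filter (fun i => n < i + m) ⊆ Finset.Ico (n - m) n := by
          intro i hi
          simp only [Finset.mem_filter, Finset.mem_range] at hi
          rw [Finset.mem_Ico]
          omega
        rw [← Finset.sum_filter, Finset.sum_const, nsmul_eq_mul]
        have hcard : ((((Finset.range n).filter (fun i => n < i + m)).card : ℕ) : ℝ)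
            ≤ (m : ℝ) := by
          have h1 : ((Finset.range n).filter (fun i => n < i + m)).card
              ≤ (Finset.Ico (n - m) n).card := Finset.card_le_card hsubs
          have h2 : (Finset.Ico (n - m) n).card ≤ m := by rw [Nat.card_Ico]; omega
          exact_mod_cast le_trans h1 h2
        calc ((((Finset.range n).filter fun i => n < i + m).card : ℕ) : ℝ) * (2*H)
            ≤ (m : ℝ) * (2*H) := mul_le_mul_of_nonneg_right hcard (by positivity)
          _ = 2*H*m := by ring
      linarith
    -- cylinder set facts
    have cylClosed : ∀ (N : ℕ) (u : Fin N → Fin k), IsClosed (cylSet X u) := by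
      intro N u
      have he : cylSet X u = ⋂ i : Fin N, {x : X | (x : ℕ → Fin k) (i : ℕ) = u i} := by
        ext x; simp [cylSet, Set.mem_iInter]
      rw [he]
      exact isClosed_iInter fun i => isClosed_eq
        ((continuous_apply ((i : ℕ))).comp continuous_subtype_val) continuous_const
    have cylCompact : ∀ (N : ℕ) (u : Fin N → Fin k), IsCompact (cylSet X u) :=
      fun N u => (cylClosed N u).isCompact
    have hle_sSup : ∀ (N : ℕ) (u : Fin N → Fin k) (x : X), x ∈ cylSet X u →
        f N x ≤ sSup (f N '' cylSet X u) := fun N u x hx =>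
      le_csSup ((cylCompact N u).image (hfc N)).bddAbove ⟨x, hx, rfl⟩
    have hsSup_pos : ∀ (N : ℕ) (u : Fin N → Fin k) (x : X), x ∈ cylSet X u →
        0 < sSup (f N '' cylSet X u) := fun N u x hx =>
      lt_of_lt_of_le (hfpos N x) (hle_sSup N u x hx)
    have hsSup_le : ∀ (N : ℕ) (u : Fin N → Fin k) (x : X), x ∈ cylSet X u →
        sSup (f N '' cylSet X u) ≤ M * f N x := by
      intro N u x hx
      refine csSup_le ⟨f N x, x, hx, rfl⟩ ?_
      rintro b ⟨z, hz, rfl⟩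
      exact hbv N z x (fun i hi => by rw [hz ⟨i, hi⟩, hx ⟨i, hi⟩])
    have hne_of_pos : ∀ (N : ℕ) (u : Fin N → Fin k),
        0 < sSup (f N '' cylSet X u) → (cylSet X u).Nonempty := by
      intro N u hpos
      by_contra hcon
      rw [Set.not_nonempty_iff_eq_empty] at hcon
      rw [hcon, Set.image_empty, Real.sSup_empty] at hpos
      exact lt_irrefl _ hpos
    -- the constant
    refine ⟨2*H*m + (p*H + |Real.log D| + 2*C + Real.log F + Real.log M), by positivity, ?_⟩
    intro n hn y
    set S := sSup (f n '' cylSet X (fun i : Fin n => (y : ℕ → Fin k) i)) with hSdef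
    have hyV : y ∈ cylSet X (fun i : Fin n => (y : ℕ → Fin k) i) := fun i => rfl
    have hSpos : 0 < S := hsSup_pos n _ y hyV
    have hvWord : WordIn X (fun i : Fin n => (y : ℕ → Fin k) i) :=
      ⟨(y : ℕ → Fin k), y.2, fun i => rfl⟩
    have step : ∀ (N : ℕ) (w : ℕ → Fin k), (cylSet X (fun i : Fin N => w i)).Nonempty →
        ∃ (t : ℕ) (w' : ℕ → Fin k),
          N ≤ t ∧ t ≤ N + p ∧ (cylSet X (fun i : Fin (t+n) => w' i)).Nonempty ∧
          (∀ i < N, w' i = w i) ∧ (∀ i < n, w' (t + i) = (y : ℕ → Fin k) i) ∧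
          D * sSup (f N '' cylSet X (fun i : Fin N => w i)) * S
            ≤ sSup (f (t+n) '' cylSet X (fun i : Fin (t+n) => w' i)) := by
      rintro N w ⟨x0, hx0⟩
      have hword : WordIn X (fun i : Fin N => w i) := ⟨(x0 : ℕ → Fin k), x0.2, hx0⟩
      obtain ⟨q, hq, w0, hw0⟩ := hC2 N n (fun i : Fin N => w i)
        (fun i : Fin n => (y : ℕ → Fin k) i) hword hvWord
      set W2 := Fin.append (Fin.append (fun i : Fin N => w i) w0)
        (fun i : Fin n => (y : ℕ → Fin k) i) with hW2def
      set w' : ℕ → Fin k := fun i => if hi : i < N + q + n then W2 ⟨i, hi⟩ else w 0 with hw'def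
      have hWe : (fun i : Fin (N + q + n) => w' ((i : ℕ))) = W2 := by
        funext i
        simp only [hw'def, i.isLt, dif_pos]
      have hcoordL : ∀ i, i < N → w' i = w i := by
        intro i hiN
        have hi' : i < N + q + n := by omega
        have hiNq : i < N + q := by omega
        rw [hw'def]
        simp only [dif_pos hi']
        have e1 : (⟨i, hi'⟩ : Fin (N + q + n)) = Fin.castAdd n (Fin.castAdd q ⟨i, hiN⟩) := by
          ext; simp
        rw [hW2def, e1, Fin.append_left, Fin.append_left]
      have hcoordR : ∀ i, i < n → w' (N + q + i) = (y : ℕ → Fin k) i := by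
        intro i hin
        have hi' : N + q + i < N + q + n := by omega
        rw [hw'def]
        simp only [dif_pos hi']
        have e1 : (⟨N + q + i, hi'⟩ : Fin (N + q + n)) = Fin.natAdd (N + q) ⟨i, hin⟩ := by
          ext; simp
        rw [hW2def, e1, Fin.append_right]
      refine ⟨N + q, w', Nat.le_add_right _ _, by omega, ?_, hcoordL, hcoordR, ?_⟩
      · apply hne_of_pos
        rw [hWe]
        refine lt_of_lt_of_le ?_ hw0
        exact mul_pos (mul_pos hD (hsSup_pos N _ x0 hx0)) hSpos
      · rw [hWe]
        exact hw0
    choose tf wf htf1 htf2 hnef hpref htailf hsupf using step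
    let Gd := {d : ℕ × (ℕ → Fin k) // (cylSet X (fun i : Fin d.1 => d.2 i)).Nonempty}
    let T : Gd → Gd :=
      fun d => ⟨(tf d.1.1 d.1.2 d.2 + n, wf d.1.1 d.1.2 d.2), hnef d.1.1 d.1.2 d.2⟩
    let Z : ℕ → Gd :=
      fun j => T^[j] ⟨(n, fun i => (y : ℕ → Fin k) i), ⟨y, fun i => rfl⟩⟩
    let Nj : ℕ → ℕ := fun j => (Z j).1.1
    let wj : ℕ → ℕ → Fin k := fun j => (Z j).1.2
    let tj : ℕ → ℕ := fun j => tf (Nj j) (wj j) (Z j).2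
    have hZsucc : ∀ j, Z (j+1) = T (Z j) := fun j => Function.iterate_succ_apply' T j _
    have hNj : ∀ j, Nj (j+1) = tj j + n := fun j => congrArg (fun d : Gd => d.1.1) (hZsucc j)
    have hwj : ∀ j, wj (j+1) = wf (Nj j) (wj j) (Z j).2 :=
      fun j => congrArg (fun d : Gd => d.1.2) (hZsucc j)
    have hN0 : Nj 0 = n := rfl
    have hw0' : ∀ i : ℕ, wj 0 i = (y : ℕ → Fin k) i := fun i => rfl
    have htj1 : ∀ j, Nj j ≤ tj j := fun j => htf1 _ _ _
    have htj2 : ∀ j, tj j ≤ Nj j + p := fun j => htf2 _ _ _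
    have hpre : ∀ j, ∀ i < Nj j, wj (j+1) i = wj j i := by
      intro j i hi
      rw [hwj j]
      exact hpref _ _ _ i hi
    have htail : ∀ j, ∀ i < n, wj (j+1) (tj j + i) = (y : ℕ → Fin k) i := by
      intro j i hi
      rw [hwj j]
      exact htailf _ _ _ i hi
    let Supj : ℕ → ℝ := fun j => sSup (f (Nj j) '' cylSet X (fun i : Fin (Nj j) => wj j i))
    let Cyl : ℕ → Set X := fun j => cylSet X (fun i : Fin (Nj j) => wj j i)
    have hSup_succ : ∀ j, D * Supj j * S ≤ Supj (j+1) := by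
      intro j
      have e : Supj (j+1) = sSup (f (tf (Nj j) (wj j) (Z j).2 + n) ''
          cylSet X (fun i : Fin (tf (Nj j) (wj j) (Z j).2 + n) => wf (Nj j) (wj j) (Z j).2 (i : ℕ))) :=
        congrArg (fun d : Gd => sSup (f d.1.1 '' cylSet X (fun i : Fin d.1.1 => d.1.2 (i : ℕ))))
          (hZsucc j)
      rw [e]
      exact hsupf (Nj j) (wj j) (Z j).2
    have hNmono : ∀ j, Nj j ≤ Nj (j+1) := by
      intro j
      have h1 := hNj j
      have h2 := htj1 j
      omega
    have hnested : ∀ j, Cyl (j+1) ⊆ Cyl j := by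
      intro j x hx i
      have hi' : (i : ℕ) < Nj (j+1) := lt_of_lt_of_le i.isLt (hNmono j)
      have := hx ⟨(i : ℕ), hi'⟩
      rw [this]
      exact hpre j (i : ℕ) i.isLt
    obtain ⟨z, hzmem⟩ : (⋂ j, Cyl j).Nonempty :=
      IsCompact.nonempty_iInter_of_sequence_nonempty_isCompact_isClosed Cyl hnested
        (fun j => (Z j).2) (cylCompact _ _) (fun j => cylClosed _ _)
    have hzj : ∀ j, z ∈ Cyl j := fun j => Set.mem_iInter.mp hzmem j
    have hzc : ∀ j, ∀ i < Nj j, (z : ℕ → Fin k) i = wj j i := fun j i hi => hzj j ⟨i, hi⟩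
    have hNlb : ∀ j, n * (j+1) ≤ Nj j := by
      intro j
      induction j with
      | zero => omega
      | succ j ih =>
        have h1 := hNj j
        have h2 := htj1 j
        have h3 : n * (j+1+1) = n * (j+1) + n := by ring
        omega
    have hNub : ∀ j, Nj j ≤ (n+p)*j + n := by
      intro j
      induction j with
      | zero => omega
      | succ j ih =>
        have h1 := hNj j
        have h2 := htj2 j
        have h3 : (n+p)*(j+1) = (n+p)*j + n + p := by ring
        omega
    have hSup_lb : ∀ j, D^j * S^(j+1) ≤ Supj j := by
      intro j
      induction j with
      | zero =>
        have he0 : Supj 0 = S := rfl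
        rw [he0]
        norm_num
      | succ j ih =>
        have h1 : D^(j+1) * S^(j+1+1) = D * (D^j * S^(j+1)) * S := by ring
        rw [h1]
        refine le_trans ?_ (hSup_succ j)
        exact mul_le_mul_of_nonneg_right
          (mul_le_mul_of_nonneg_left ih hD.le) hSpos.le
    have hflb : ∀ j, D^j * S^(j+1) ≤ M * f (Nj j) z :=
      fun j => (hSup_lb j).trans (hsSup_le (Nj j) _ z (hzj j))
    -- tail of z lies in the cylinder of y
    have hmem_tail : ∀ j, (σ^[tj j] z) ∈ cylSet X (fun i : Fin n => (y : ℕ → Fin k) i) := by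
      intro j i
      have h1 := hNj j
      have hi' : (i : ℕ) + tj j < Nj (j+1) := by have := i.isLt; omega
      rw [hcoord (tj j) z (i : ℕ), hzc (j+1) _ hi', add_comm ((i : ℕ)) (tj j)]
      exact htail j (i : ℕ) i.isLt
    have hfub : ∀ j, f (Nj j) z ≤ S * (Real.exp (2*C) * F * S)^j := by
      intro j
      induction j with
      | zero =>
        calc f (Nj 0) z ≤ Supj 0 := hle_sSup _ _ z (hzj 0)
          _ = S := rfl
          _ = S * (Real.exp (2*C) * F * S)^0 := by rw [pow_zero, mul_one]
      | succ j ih =>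
        have h1 := htj1 j
        have h2 := htj2 j
        have hsplit : Nj (j+1) = Nj j + ((tj j - Nj j) + n) := by
          have := hNj j; omega
        have hpt2 : σ^[tj j - Nj j] (σ^[Nj j] z) = σ^[tj j] z := by
          rw [← Function.iterate_add_apply]
          congr 1
          omega
        have hq : f (tj j - Nj j) (σ^[Nj j] z) ≤ F := hFb _ (by omega) _
        have hnS : f n (σ^[tj j - Nj j] (σ^[Nj j] z)) ≤ S := by
          rw [hpt2]
          exact hle_sSup n _ _ (hmem_tail j)
        have hstep1 : f (Nj (j+1)) z ≤ Real.exp C * f (Nj j) z * f ((tj j - Nj j) + n) (σ^[Nj j] z) := by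
          rw [hsplit]
          exact hsub _ _ z
        have hstep2 : f ((tj j - Nj j) + n) (σ^[Nj j] z)
            ≤ Real.exp C * f (tj j - Nj j) (σ^[Nj j] z) * f n (σ^[tj j - Nj j] (σ^[Nj j] z)) :=
          hsub _ _ _
        have hE : (0:ℝ) < Real.exp C := Real.exp_pos C
        have hp1 : 0 < f (Nj j) z := hfpos _ _
        have hp2 : 0 < f (tj j - Nj j) (σ^[Nj j] z) := hfpos _ _
        have hp3 : 0 < f n (σ^[tj j - Nj j] (σ^[Nj j] z)) := hfpos _ _
        have hB : Real.exp (2*C) = Real.exp C * Real.exp C := by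
          rw [two_mul, Real.exp_add]
        have hFpos : (0:ℝ) < F := lt_of_lt_of_le one_pos hF1
        have hstep3 : f ((tj j - Nj j) + n) (σ^[Nj j] z) ≤ Real.exp C * F * S :=
          hstep2.trans (mul_le_mul (mul_le_mul_of_nonneg_left hq hE.le) hnS hp3.le
            (by positivity))
        have hBpos : (0:ℝ) < Real.exp (2*C) * F * S := by
          have : (0:ℝ) < F := lt_of_lt_of_le one_pos hF1
          positivity
        have hBj : (0:ℝ) < (Real.exp (2*C) * F * S)^j := pow_pos hBpos j
        calc f (Nj (j+1)) z ≤ Real.exp C * f (Nj j) z * f ((tj j - Nj j) + n) (σ^[Nj j] z) := hstep1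
          _ ≤ Real.exp C * f (Nj j) z * (Real.exp C * F * S) :=
              mul_le_mul_of_nonneg_left hstep3 (by positivity)
          _ ≤ Real.exp C * (S * (Real.exp (2*C) * F * S)^j) * (Real.exp C * F * S) :=
              mul_le_mul_of_nonneg_right (mul_le_mul_of_nonneg_left ih hE.le)
                (by positivity)
          _ = S * (Real.exp (2*C) * F * S)^(j+1) := by rw [pow_succ, hB]; ring
    -- Birkhoff sum estimates along z
    have hzy : ∀ i < n, (z : ℕ → Fin k) i = (y : ℕ → Fin k) i := by
      intro i hi
      have hN0' := hN0
      have hi0 : i < Nj 0 := by omega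
      rw [hzc 0 i hi0]
      exact hw0' i
    set W := (n:ℝ) * ε + 2*H*m with hWdef
    have hW0 : 0 ≤ W := by positivity
    have hA0 : |birk σ h n z - birk σ h n y| ≤ W := hvar n z y hzy
    have hAtail : ∀ j, |birk σ h n (σ^[tj j] z) - birk σ h n y| ≤ W := by
      intro j
      exact hvar n _ y (fun i hi => hmem_tail j ⟨i, hi⟩)
    have hAmid : ∀ j, |birk σ h (tj j - Nj j) (σ^[Nj j] z)| ≤ (p:ℝ) * H := by
      intro j
      refine (birk_abs_le σ h _ _ H hHb).trans ?_
      have h2 := htj2 j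
      have h1 := htj1 j
      have hc : ((tj j - Nj j : ℕ) : ℝ) ≤ (p : ℝ) := by exact_mod_cast (by omega : tj j - Nj j ≤ p)
      exact mul_le_mul_of_nonneg_right hc hH0
    have hAsplit : ∀ j, birk σ h (Nj (j+1)) z
        = birk σ h (Nj j) z + birk σ h (tj j - Nj j) (σ^[Nj j] z) + birk σ h n (σ^[tj j] z) := by
      intro j
      have h1 := htj1 j
      rw [hNj j, birk_add σ h (tj j) n z]
      congr 1
      rw [← birk_add σ h (Nj j) (tj j - Nj j) z]
      congr 1
      omega
    have hAub : ∀ j : ℕ, birk σ h (Nj j) z ≤ ((j:ℝ)+1) * (birk σ h n y + W) + (j:ℝ) * ((p:ℝ)*H) := by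
      intro j
      induction j with
      | zero =>
        have h1 := abs_le.mp hA0
        have e : birk σ h (Nj 0) z = birk σ h n z := by rw [hN0]
        rw [e]
        push_cast
        linarith [h1.2]
      | succ j ih =>
        have h1 := abs_le.mp (hAtail j)
        have h2 := abs_le.mp (hAmid j)
        rw [hAsplit j]
        push_cast
        push_cast at ih
        linarith [h1.2, h2.2]
    have hAlb : ∀ j : ℕ, ((j:ℝ)+1) * (birk σ h n y - W) - (j:ℝ) * ((p:ℝ)*H) ≤ birk σ h (Nj j) z := by
      intro j
      induction j with
      | zero =>
        have h1 := abs_le.mp hA0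
        have e : birk σ h (Nj 0) z = birk σ h n z := by rw [hN0]
        rw [e]
        push_cast
        linarith [h1.1]
      | succ j ih =>
        have h1 := abs_le.mp (hAtail j)
        have h2 := abs_le.mp (hAmid j)
        rw [hAsplit j]
        push_cast
        push_cast at ih
        linarith [h1.1, h2.1]
    -- logarithmic estimates
    have hflog_lb : ∀ j : ℕ, (j:ℝ) * Real.log D + ((j:ℝ)+1) * Real.log S - Real.log M
        ≤ Real.log (f (Nj j) z) := by
      intro j
      have h1 : Real.log (D^j * S^(j+1)) ≤ Real.log (M * f (Nj j) z) :=
        Real.log_le_log (by positivity) (hflb j)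
      rw [Real.log_mul (by positivity) (by positivity),
        Real.log_mul (ne_of_gt hMpos) (ne_of_gt (hfpos _ _)),
        Real.log_pow, Real.log_pow] at h1
      push_cast at h1
      linarith
    have hFpos : (0:ℝ) < F := lt_of_lt_of_le one_pos hF1
    have hflog_ub : ∀ j : ℕ, Real.log (f (Nj j) z)
        ≤ Real.log S + (j:ℝ) * (2*C + Real.log F + Real.log S) := by
      intro j
      have h1 : Real.log (f (Nj j) z) ≤ Real.log (S * (Real.exp (2*C) * F * S)^j) :=
        Real.log_le_log (hfpos _ _) (hfub j)
      rw [Real.log_mul (ne_of_gt hSpos) (by positivity), Real.log_pow,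
        Real.log_mul (by positivity) (ne_of_gt hSpos),
        Real.log_mul (ne_of_gt (Real.exp_pos _)) (ne_of_gt hFpos), Real.log_exp] at h1
      push_cast at h1
      linarith
    -- the pointwise limit along the subsequence
    have hNtend : Tendsto Nj atTop atTop := by
      refine tendsto_atTop_mono (fun j => ?_) tendsto_id
      have h1 := hNlb j
      have h2 : j + 1 ≤ n * (j+1) := Nat.le_mul_of_pos_left _ hn
      simp only [id_eq]
      omega
    have hφN : Tendsto (fun j => (1/((Nj j : ℕ):ℝ)) * (Real.log (f (Nj j) z) - birk σ h (Nj j) z))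
        atTop (𝓝 0) := by
      have h0 := (hpt z).comp hNtend
      refine h0.congr (fun j => ?_)
      simp only [Function.comp_apply]
      rw [hlog]
    have hφj : Tendsto (fun j : ℕ => (Real.log (f (Nj j) z) - birk σ h (Nj j) z) / ((j:ℕ):ℝ))
        atTop (𝓝 0) := by
      apply squeeze_zero_norm' (a := fun j : ℕ => (2*((n:ℝ)+(p:ℝ))) *
        ‖(1/((Nj j : ℕ):ℝ)) * (Real.log (f (Nj j) z) - birk σ h (Nj j) z)‖)
      · filter_upwards [eventually_ge_atTop 1] with j hj
        have hjpos : (0:ℝ) < (j:ℝ) := by exact_mod_cast hj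
        have hN1 : 1 ≤ Nj j := by
          have h1 := hNlb j
          have h2 : 1 ≤ n * (j+1) := by
            have := Nat.mul_le_mul hn (Nat.le_add_left 1 j)
            omega
          omega
        have hNpos : (0:ℝ) < ((Nj j : ℕ):ℝ) := by exact_mod_cast hN1
        have hNle : ((Nj j : ℕ):ℝ) ≤ 2*((n:ℝ)+(p:ℝ)) * (j:ℝ) := by
          have h1 := hNub j
          have h2 : n + p ≤ (n+p) * j := Nat.le_mul_of_pos_right _ (by omega)
          have h3 : Nj j ≤ 2*((n+p)*j) := by omega
          calc ((Nj j : ℕ):ℝ) ≤ ((2*((n+p)*j) : ℕ) : ℝ) := by exact_mod_cast h3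
            _ = 2*((n:ℝ)+(p:ℝ))*(j:ℝ) := by push_cast; ring
        have hkey : (1:ℝ)/(j:ℝ) ≤ (2*((n:ℝ)+(p:ℝ)))/((Nj j : ℕ):ℝ) := by
          rw [div_le_div_iff₀ hjpos hNpos]
          linarith
        calc ‖(Real.log (f (Nj j) z) - birk σ h (Nj j) z) / ((j:ℕ):ℝ)‖
            = |Real.log (f (Nj j) z) - birk σ h (Nj j) z| * (1/(j:ℝ)) := by
              rw [Real.norm_eq_abs, abs_div, abs_of_pos hjpos, div_eq_mul_one_div]
          _ ≤ |Real.log (f (Nj j) z) - birk σ h (Nj j) z| * ((2*((n:ℝ)+(p:ℝ)))/((Nj j : ℕ):ℝ)) :=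
              mul_le_mul_of_nonneg_left hkey (abs_nonneg _)
          _ = 2*((n:ℝ)+(p:ℝ)) * ‖(1/((Nj j : ℕ):ℝ)) * (Real.log (f (Nj j) z) - birk σ h (Nj j) z)‖ := by
              rw [Real.norm_eq_abs, abs_mul, abs_of_pos (by positivity : (0:ℝ) < 1/((Nj j : ℕ):ℝ))]
              ring
      · have h1 := hφN.norm
        rw [norm_zero] at h1
        have h2 := h1.const_mul (2*((n:ℝ)+(p:ℝ)))
        rw [mul_zero] at h2
        exact h2
    -- limits of affine expressions
    have hlim_aux : ∀ A B E : ℝ, Tendsto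
        (fun j : ℕ => (((j:ℝ)+1) * A + (j:ℝ) * B + E) / (j:ℝ)) atTop (𝓝 (A + B)) := by
      intro A B E
      have h1 : Tendsto (fun j : ℕ => A + B + (A + E) * (1/(j:ℝ))) atTop
          (𝓝 (A + B + (A+E) * 0)) :=
        tendsto_const_nhds.add (tendsto_const_nhds.mul tendsto_one_div_atTop_nhds_zero_nat)
      rw [mul_zero, add_zero] at h1
      refine h1.congr' ?_
      filter_upwards [eventually_ge_atTop 1] with j hj
      have hj0 : (j:ℝ) ≠ 0 := by
        have : (0:ℝ) < (j:ℝ) := by exact_mod_cast hj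
        exact ne_of_gt this
      field_simp
      ring
    have ha1 : (Real.log S - birk σ h n y - W) + (Real.log D - (p:ℝ)*H) ≤ 0 := by
      have hL := hlim_aux (Real.log S - birk σ h n y - W) (Real.log D - (p:ℝ)*H)
        (-(Real.log M))
      refine le_of_tendsto_of_tendsto hL hφj ?_
      filter_upwards [eventually_ge_atTop 1] with j hj
      have hjpos : (0:ℝ) < (j:ℝ) := by exact_mod_cast hj
      refine (div_le_div_iff_of_pos_right hjpos).mpr ?_
      have h1 := hflog_lb j
      have h2 := hAub j
      linarith
    have ha2 : 0 ≤ (Real.log S - birk σ h n y + W) + (2*C + Real.log F + (p:ℝ)*H) := by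
      have hL := hlim_aux (Real.log S - birk σ h n y + W) (2*C + Real.log F + (p:ℝ)*H) 0
      refine le_of_tendsto_of_tendsto hφj hL ?_
      filter_upwards [eventually_ge_atTop 1] with j hj
      have hjpos : (0:ℝ) < (j:ℝ) := by exact_mod_cast hj
      refine (div_le_div_iff_of_pos_right hjpos).mpr ?_
      have h1 := hflog_ub j
      have h2 := hAlb j
      linarith
    -- conclusion
    have hyub : Real.log (f n y) ≤ Real.log S :=
      Real.log_le_log (hfpos n y) (hle_sSup n _ y hyV)
    have hylb : Real.log S - Real.log M ≤ Real.log (f n y) := by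
      have h1 : Real.log S ≤ Real.log (M * f n y) :=
        Real.log_le_log hSpos (hsSup_le n _ y hyV)
      rw [Real.log_mul (ne_of_gt hMpos) (ne_of_gt (hfpos n y))] at h1
      linarith
    have hDabs : -Real.log D ≤ |Real.log D| := neg_le_abs _
    have hDabs2 : (0:ℝ) ≤ |Real.log D| := abs_nonneg _
    rw [abs_le]
    have hWd := hWdef
    constructor
    · have h1 := ha2
      push_cast
      linarith
    · have h1 := ha1
      push_cast
      linarith
  rw [NormedAddCommGroup.tendsto_nhds_zero]
  intro ε hε
  obtain ⟨K, hK0, hK⟩ := key (ε / 4) (by linarith)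
  obtain ⟨N₁, hN₁⟩ := exists_nat_gt (K / (ε / 4))
  filter_upwards [eventually_ge_atTop (max 1 (N₁ + 1))] with n hn
  have hn1 : 1 ≤ n := le_trans (le_max_left _ _) hn
  have hnpos : (0:ℝ) < n := by exact_mod_cast hn1
  have hsup_le : (⨆ x : X, |Real.log (f n x / Real.exp (birk σ h n x))|) ≤ n * (ε/4) + K := by
    refine ciSup_le fun x => ?_
    rw [hlog]
    exact hK n hn1 x
  have hsup_nonneg : 0 ≤ ⨆ x : X, |Real.log (f n x / Real.exp (birk σ h n x))| :=
    Real.iSup_nonneg fun x => abs_nonneg _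
  have h1 : (1 / (n:ℝ)) * (⨆ x : X, |Real.log (f n x / Real.exp (birk σ h n x))|)
      ≤ ε/4 + K / n := by
    have h2 := mul_le_mul_of_nonneg_left hsup_le (by positivity : (0:ℝ) ≤ 1/(n:ℝ))
    calc (1 / (n:ℝ)) * (⨆ x : X, |Real.log (f n x / Real.exp (birk σ h n x))|)
        ≤ (1/(n:ℝ)) * ((n:ℝ) * (ε/4) + K) := h2
      _ = ε/4 + K / n := by field_simp
  have hKn : K / n < ε / 4 := by
    rw [div_lt_iff₀ hnpos]
    have hN₁' : K < N₁ * (ε/4) := by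
      rw [div_lt_iff₀ (by linarith : (0:ℝ) < ε/4)] at hN₁
      linarith
    have : (N₁ : ℝ) ≤ n := by
      have : N₁ + 1 ≤ n := le_trans (le_max_right _ _) hn
      exact_mod_cast le_trans (Nat.le_succ _) this
    nlinarith [mul_le_mul_of_nonneg_right this (by linarith : (0:ℝ) ≤ ε/4)]
  have habs : ‖(1 / (n:ℝ)) * ⨆ x : X, |Real.log (f n x / Real.exp (birk σ h n x))|‖
      = (1 / (n:ℝ)) * ⨆ x : X, |Real.log (f n x / Real.exp (birk σ h n x))| := by
    rw [Real.norm_eq_abs, abs_of_nonneg]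
    positivity
  rw [habs]
  calc (1 / (n:ℝ)) * ⨆ x : X, |Real.log (f n x / Real.exp (birk σ h n x))|
      ≤ ε/4 + K/n := h1
    _ < ε/4 + ε/4 := by linarith
    _ < ε := by linarith
end

section
/- Let $(X,\sigma)$ be a one-sided subshift, $\{\log f_n\}$ a subadditive sequence of logarithms of continuous positive functions with topological pressure $P(\mathcal F) = \limsup_n \frac1n \log \sum_{u\in B_n(X)} \sup\{f_n(x): x \in [u]\}$ finite. Suppose $m$ is a $\sigma$-invariant Gibbs measure for $\mathcal F$, i.e. there is $C>0$ with $1/C < m[x_1\dots x_n]/(e^{-nP(\mathcal F)} f_n(x)) < C$ for all $x\in X$, $n$. If $\{\log f_n\}$ is asymptotically additive with $\lim_n \frac1n\|\log f_n - S_n h\|_\infty = 0$ for some $h \in C(X)$, then $m$ is an invariant weak Gibbs measure for $h$: there exist $A_n > 0$ with $\frac1n \log A_n \to 0$ and $1/A_n \le m[x_1\dots x_n]/(e^{-nP(h)+(S_n h)(x)}) \le A_n$ for all $x \in [x_1\dots x_n]$. -/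
open Filter Topology MeasureTheory

/-- The cylinder of the first `n` coordinates of a point `x` of the subshift. -/
def cylPt {k : ℕ} (X : Set (ℕ → Fin k)) (x : X) (n : ℕ) : Set X :=
  {y : X | ∀ i < n, (y : ℕ → Fin k) i = (x : ℕ → Fin k) i}

/-- Topological pressure of the (sub)additive sequence `{log f_n}` on the subshift `X`:
`P(𝓕) = limsup_n (1/n) log ∑_{u ∈ B_n} sup_{[u]} f_n`. -/
noncomputable def seqPressure {k : ℕ} (X : Set (ℕ → Fin k)) (f : ℕ → X → ℝ) : ℝ :=
  Filter.limsup
    (fun n : ℕ => (1 / (n : ℝ)) *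
      Real.log (∑ u : Fin n → Fin k, sSup ((f n) '' cylSet X u)))
    Filter.atTop

/-- If two sequences eventually differ by a quantity tending to zero and one is bounded,
they have the same limsup. -/
lemma limsup_eq_of_abs_sub_le {u v ε : ℕ → ℝ}
    (hε : Tendsto ε atTop (𝓝 0))
    (hb : ∀ᶠ n in atTop, |u n - v n| ≤ ε n)
    (hu1 : IsBoundedUnder (· ≤ ·) atTop u)
    (hu2 : IsBoundedUnder (· ≥ ·) atTop u) :
    limsup v atTop = limsup u atTop := by
  have hε1 : ∀ᶠ n in atTop, ε n ≤ 1 := hε.eventually (eventually_le_nhds one_pos)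
  obtain ⟨M, hM⟩ := id hu1
  obtain ⟨L, hL⟩ := id hu2
  simp only [eventually_map] at hM hL
  have hv1 : IsBoundedUnder (· ≤ ·) atTop v := by
    refine ⟨M + 1, eventually_map.2 ?_⟩
    filter_upwards [hM, hb, hε1] with n h1 h2 h3
    have := abs_le.1 h2
    linarith
  have hv2 : IsBoundedUnder (· ≥ ·) atTop v := by
    refine ⟨L - 1, eventually_map.2 ?_⟩
    filter_upwards [hL, hb, hε1] with n h1 h2 h3
    have := abs_le.1 h2
    linarith
  have key : ∀ (a b : ℕ → ℝ), IsBoundedUnder (· ≤ ·) atTop a →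
      IsBoundedUnder (· ≥ ·) atTop a → IsBoundedUnder (· ≤ ·) atTop b →
      IsBoundedUnder (· ≥ ·) atTop b → (∀ᶠ n in atTop, |a n - b n| ≤ ε n) →
      limsup b atTop ≤ limsup a atTop := by
    intro a b ha1 ha2 hb1 hb2 hab
    refine le_of_forall_pos_le_add fun δ hδ => ?_
    have h1 : ∀ᶠ n in atTop, b n ≤ a n + δ := by
      filter_upwards [hab, hε.eventually (eventually_le_nhds hδ)] with n h1 h2
      have := abs_le.1 h1; linarith
    calc limsup b atTop ≤ limsup (fun n => a n + δ) atTop :=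
          limsup_le_limsup h1 (hb2.isCoboundedUnder_le)
            (by obtain ⟨Ma, hMa⟩ := id ha1
                exact ⟨Ma + δ, by
                  simp only [eventually_map] at hMa ⊢
                  filter_upwards [hMa] with n hn; linarith⟩)
      _ = limsup a atTop + δ :=
          limsup_add_const atTop a δ ha1 ha2.isCoboundedUnder_le
  refine le_antisymm (key u v hu1 hu2 hv1 hv2 hb) (key v u hv1 hv2 hu1 hu2 ?_)
  filter_upwards [hb] with n hn; rwa [abs_sub_comm]

lemma cylSet_isCompact {k : ℕ} (X : Set (ℕ → Fin k)) [CompactSpace X] {n : ℕ}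
    (u : Fin n → Fin k) : IsCompact (cylSet X u) := by
  have hcl : IsClosed (cylSet X u) := by
    have : cylSet X u = ⋂ i : Fin n, {x : X | (x : ℕ → Fin k) (i : ℕ) = u i} := by
      ext x; simp [cylSet, Set.mem_iInter]
    rw [this]
    exact isClosed_iInter fun i =>
      isClosed_eq ((continuous_apply (i : ℕ)).comp continuous_subtype_val) continuous_const
  exact hcl.isCompact

lemma sum_sSup_pos {k : ℕ} (X : Set (ℕ → Fin k)) [CompactSpace X] [Nonempty X]
    (p : X → ℝ) (hp : Continuous p) (hppos : ∀ x, 0 < p x) (n : ℕ) :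
    0 < ∑ u : Fin n → Fin k, sSup (p '' cylSet X u) := by
  obtain ⟨x₀⟩ := ‹Nonempty X›
  set u₀ : Fin n → Fin k := fun i => (x₀ : ℕ → Fin k) (i : ℕ) with hu₀
  have hx₀ : x₀ ∈ cylSet X u₀ := fun i => rfl
  refine Finset.sum_pos' (fun u _ => Real.sSup_nonneg fun y hy => ?_) ⟨u₀, Finset.mem_univ _, ?_⟩
  · obtain ⟨x, -, rfl⟩ := hy
    exact (hppos x).le
  · refine lt_of_lt_of_le (hppos x₀) (le_csSup ?_ ⟨x₀, hx₀, rfl⟩)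
    exact ((cylSet_isCompact X u₀).image hp).bddAbove

lemma log_sum_sSup_le {k : ℕ} (X : Set (ℕ → Fin k)) [CompactSpace X] [Nonempty X]
    (p q : X → ℝ) (hp : Continuous p) (hq : Continuous q)
    (hppos : ∀ x, 0 < p x) (hqpos : ∀ x, 0 < q x) (d : ℝ)
    (hd : ∀ x, p x ≤ Real.exp d * q x) (n : ℕ) :
    Real.log (∑ u : Fin n → Fin k, sSup (p '' cylSet X u)) ≤
      d + Real.log (∑ u : Fin n → Fin k, sSup (q '' cylSet X u)) := by
  have hsum : (∑ u : Fin n → Fin k, sSup (p '' cylSet X u)) ≤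
      Real.exp d * ∑ u : Fin n → Fin k, sSup (q '' cylSet X u) := by
    rw [Finset.mul_sum]
    refine Finset.sum_le_sum fun u _ => ?_
    rcases Set.eq_empty_or_nonempty (cylSet X u) with he | hne
    · simp [he, Real.sSup_empty]
    · refine csSup_le (hne.image p) ?_
      rintro y ⟨x, hx, rfl⟩
      calc p x ≤ Real.exp d * q x := hd x
        _ ≤ Real.exp d * sSup (q '' cylSet X u) := by
            refine mul_le_mul_of_nonneg_left
              (le_csSup (((cylSet_isCompact X u).image hq).bddAbove) ⟨x, hx, rfl⟩)
              (Real.exp_pos d).le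
  calc Real.log (∑ u : Fin n → Fin k, sSup (p '' cylSet X u)) ≤
        Real.log (Real.exp d * ∑ u : Fin n → Fin k, sSup (q '' cylSet X u)) :=
        Real.log_le_log (sum_sSup_pos X p hp hppos n) hsum
    _ = d + Real.log (∑ u : Fin n → Fin k, sSup (q '' cylSet X u)) := by
        rw [Real.log_mul (Real.exp_ne_zero d) (sum_sSup_pos X q hq hqpos n).ne', Real.log_exp]

theorem stmt7 {k : ℕ} (X : Set (ℕ → Fin k)) (hX : IsSubshift X)
    (σ : X → X) (hσ : ∀ x : X, (σ x : ℕ → Fin k) = shiftMap (x : ℕ → Fin k))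
    (f : ℕ → X → ℝ) (hfc : ∀ n, Continuous (f n)) (hfpos : ∀ n x, 0 < f n x)
    (hsub : ∀ n m x, f (n + m) x ≤ f n x * f m (σ^[n] x))
    -- finiteness of the pressure of 𝓕
    (hfin₁ : IsBoundedUnder (· ≤ ·) atTop
      (fun n : ℕ => (1 / (n : ℝ)) *
        Real.log (∑ u : Fin n → Fin k, sSup ((f n) '' cylSet X u))))
    (hfin₂ : IsBoundedUnder (· ≥ ·) atTop
      (fun n : ℕ => (1 / (n : ℝ)) *
        Real.log (∑ u : Fin n → Fin k, sSup ((f n) '' cylSet X u))))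
    -- m is an invariant Gibbs measure for 𝓕
    (m : Measure X) (hmprob : IsProbabilityMeasure m) (hminv : MeasurePreserving σ m m)
    (C : ℝ) (hCpos : 0 < C)
    (hGibbs : ∀ (x : X) (n : ℕ),
      1 / C < (m (cylPt X x n)).toReal / (Real.exp (-(n * seqPressure X f)) * f n x) ∧
      (m (cylPt X x n)).toReal / (Real.exp (-(n * seqPressure X f)) * f n x) < C)
    -- asymptotic additivity with limit function h
    (h : X → ℝ) (hh : Continuous h)
    (haa : Tendsto
      (fun n : ℕ => (1 / (n : ℝ)) * ⨆ x : X, |Real.log (f n x) - birk σ h n x|)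
      atTop (𝓝 0)) :
    ∃ A : ℕ → ℝ, (∀ n, 0 < A n) ∧
      Tendsto (fun n : ℕ => (1 / (n : ℝ)) * Real.log (A n)) atTop (𝓝 0) ∧
      ∀ (x : X) (n : ℕ),
        1 / A n ≤ (m (cylPt X x n)).toReal /
          Real.exp (-(n * seqPressure X (fun n' y => Real.exp (birk σ h n' y))) + birk σ h n x) ∧
        (m (cylPt X x n)).toReal /
          Real.exp (-(n * seqPressure X (fun n' y => Real.exp (birk σ h n' y))) + birk σ h n x)
          ≤ A n := by
  -- basic topological setup
  haveI : Nonempty X := by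
    by_contra h0
    rw [not_nonempty_iff] at h0
    have h1 : m Set.univ = 1 := hmprob.measure_univ
    rw [Set.univ_eq_empty_iff.2 h0, measure_empty] at h1
    exact one_ne_zero h1.symm
  haveI : CompactSpace X := isCompact_iff_compactSpace.mp hX.1.isCompact
  have hσc : Continuous σ := by
    rw [continuous_induced_rng]
    have he : (Subtype.val ∘ σ : X → ℕ → Fin k) =
        fun x : X => shiftMap (x : ℕ → Fin k) := funext hσ
    rw [he]
    exact (continuous_pi fun n => (continuous_apply (n + 1)).comp continuous_subtype_val)
  have hbirkc : ∀ n, Continuous (birk σ h n) := fun n =>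
    continuous_finset_sum _ fun i _ => hh.comp (hσc.iterate i)
  have hlogc : ∀ n, Continuous fun x => Real.log (f n x) := fun n =>
    (hfc n).log fun x => (hfpos n x).ne'
  -- the sup sequence D
  set D : ℕ → ℝ := fun n => ⨆ x : X, |Real.log (f n x) - birk σ h n x| with hD
  have hDbdd : ∀ n, BddAbove (Set.range fun x : X => |Real.log (f n x) - birk σ h n x|) :=
    fun n => (isCompact_range ((hlogc n).sub (hbirkc n)).abs).bddAbove
  have hDle : ∀ n (x : X), |Real.log (f n x) - birk σ h n x| ≤ D n :=
    fun n x => le_ciSup (hDbdd n) x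
  have hD0 : ∀ n, 0 ≤ D n := fun n => by
    obtain ⟨x₀⟩ := ‹Nonempty X›
    exact le_trans (abs_nonneg _) (hDle n x₀)
  -- pressures agree
  set g : ℕ → X → ℝ := fun n' y => Real.exp (birk σ h n' y) with hg
  have hgc : ∀ n, Continuous (g n) := fun n => Real.continuous_exp.comp (hbirkc n)
  have hgpos : ∀ n x, 0 < g n x := fun n x => Real.exp_pos _
  have hPeq : seqPressure X g = seqPressure X f := by
    unfold seqPressure
    refine limsup_eq_of_abs_sub_le haa (Eventually.of_forall fun n => ?_) hfin₁ hfin₂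
    have h1 : Real.log (∑ u : Fin n → Fin k, sSup ((f n) '' cylSet X u)) ≤
        D n + Real.log (∑ u : Fin n → Fin k, sSup ((g n) '' cylSet X u)) := by
      refine log_sum_sSup_le X (f n) (g n) (hfc n) (hgc n) (hfpos n) (hgpos n) (D n)
        (fun x => ?_) n
      have := (abs_le.1 (hDle n x)).2
      calc f n x = Real.exp (Real.log (f n x)) := (Real.exp_log (hfpos n x)).symm
        _ ≤ Real.exp (D n + birk σ h n x) := Real.exp_le_exp.2 (by linarith)
        _ = Real.exp (D n) * g n x := by rw [Real.exp_add]
    have h2 : Real.log (∑ u : Fin n → Fin k, sSup ((g n) '' cylSet X u)) ≤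
        D n + Real.log (∑ u : Fin n → Fin k, sSup ((f n) '' cylSet X u)) := by
      refine log_sum_sSup_le X (g n) (f n) (hgc n) (hfc n) (hgpos n) (hfpos n) (D n)
        (fun x => ?_) n
      have := (abs_le.1 (hDle n x)).1
      calc g n x = Real.exp (birk σ h n x) := rfl
        _ ≤ Real.exp (D n + Real.log (f n x)) := Real.exp_le_exp.2 (by linarith)
        _ = Real.exp (D n) * f n x := by
            rw [Real.exp_add, Real.exp_log (hfpos n x)]
    have hn0 : (0 : ℝ) ≤ 1 / (n : ℝ) := by positivity
    rw [abs_le]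
    constructor
    · have := mul_le_mul_of_nonneg_left h2 hn0
      nlinarith [mul_le_mul_of_nonneg_left h2 hn0]
    · nlinarith [mul_le_mul_of_nonneg_left h1 hn0]
  -- the constants A n
  refine ⟨fun n => C * Real.exp (D n), fun n => mul_pos hCpos (Real.exp_pos _), ?_, ?_⟩
  · have hlog : ∀ n : ℕ, (1 / (n : ℝ)) * Real.log (C * Real.exp (D n)) =
        (1 / (n : ℝ)) * Real.log C + (1 / (n : ℝ)) * D n := by
      intro n
      rw [Real.log_mul hCpos.ne' (Real.exp_ne_zero _), Real.log_exp, mul_add]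
    simp only [hlog]
    have h1 : Tendsto (fun n : ℕ => (1 / (n : ℝ)) * Real.log C) atTop (𝓝 0) := by
      have := tendsto_const_div_atTop_nhds_zero_nat (Real.log C)
      refine this.congr fun n => by ring
    simpa using h1.add haa
  · intro x n
    rw [hPeq]
    set t := (m (cylPt X x n)).toReal with ht
    have hGx := hGibbs x n
    set R := t / (Real.exp (-(n * seqPressure X f)) * f n x) with hR
    have hRpos : 0 < R := lt_trans (by positivity) hGx.1
    set E := Real.exp (Real.log (f n x) - birk σ h n x) with hE
    have hEub : E ≤ Real.exp (D n) := Real.exp_le_exp.2 (abs_le.1 (hDle n x)).2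
    have hElb : Real.exp (-(D n)) ≤ E := Real.exp_le_exp.2 (by
      have := (abs_le.1 (hDle n x)).1; linarith)
    have hratio : t / Real.exp (-(n * seqPressure X f) + birk σ h n x) = R * E := by
      rw [hR, hE, Real.exp_sub, Real.exp_add, Real.exp_log (hfpos n x),
        div_mul_div_comm, show Real.exp (-(↑n * seqPressure X f)) * f n x *
          Real.exp (birk σ h n x) =
          Real.exp (-(↑n * seqPressure X f)) * Real.exp (birk σ h n x) * f n x by ring,
        mul_div_mul_right _ _ (hfpos n x).ne']
    rw [hratio]
    constructor
    · have : 1 / (C * Real.exp (D n)) = (1 / C) * Real.exp (-(D n)) := by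
        rw [Real.exp_neg]; field_simp
      rw [this]
      exact mul_le_mul hGx.1.le hElb (Real.exp_pos _).le hRpos.le
    · exact mul_le_mul hGx.2.le hEub (Real.exp_pos _).le hCpos.le
end

section
/- Let $(X,\sigma)$ be a one-sided subshift, $\{\log f_n\}$ a subadditive sequence with finite pressure $P(\mathcal F)$, and let $m$ be a $\sigma$-invariant Gibbs measure for $\mathcal F$ (constant $C$). If $m$ is also an invariant weak Gibbs measure for some continuous function $\tilde h$ on $X$ (with constants $C_n$, $\frac1n\log C_n \to 0$), then $\frac{1}{C_n C} \le f_n(x) / e^{(S_n(\tilde h - P(\tilde h)+P(\mathcal F)))(x)} \le C_n C$ for all $x \in X$ and $n$; in particular $\{\log f_n\}$ is asymptotically additive. -/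
open Filter Topology MeasureTheory

theorem stmt8 {k : ℕ} (X : Set (ℕ → Fin k)) (hX : IsSubshift X)
    (σ : X → X) (hσ : ∀ x : X, (σ x : ℕ → Fin k) = shiftMap (x : ℕ → Fin k))
    (f : ℕ → X → ℝ) (hfc : ∀ n, Continuous (f n)) (hfpos : ∀ n x, 0 < f n x)
    (hsub : ∀ n m x, f (n + m) x ≤ f n x * f m (σ^[n] x))
    -- finiteness of the pressure of 𝓕
    (hfin₁ : IsBoundedUnder (· ≤ ·) atTop
      (fun n : ℕ => (1 / (n : ℝ)) *
        Real.log (∑ u : Fin n → Fin k, sSup ((f n) '' cylSet X u))))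
    (hfin₂ : IsBoundedUnder (· ≥ ·) atTop
      (fun n : ℕ => (1 / (n : ℝ)) *
        Real.log (∑ u : Fin n → Fin k, sSup ((f n) '' cylSet X u))))
    -- m is an invariant Gibbs measure for 𝓕 with constant C
    (m : Measure X) (hmprob : IsProbabilityMeasure m) (hminv : MeasurePreserving σ m m)
    (C : ℝ) (hCpos : 0 < C)
    (hGibbs : ∀ (x : X) (n : ℕ),
      1 / C ≤ (m (cylPt X x n)).toReal / (Real.exp (-(n * seqPressure X f)) * f n x) ∧
      (m (cylPt X x n)).toReal / (Real.exp (-(n * seqPressure X f)) * f n x) ≤ C)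
    -- m is an invariant weak Gibbs measure for a continuous function h̃
    (htil : X → ℝ) (hhtil : Continuous htil)
    (Cn : ℕ → ℝ) (hCn : ∀ n, 0 < Cn n)
    (hCnlim : Tendsto (fun n : ℕ => (1 / (n : ℝ)) * Real.log (Cn n)) atTop (𝓝 0))
    (hwG : ∀ (x : X) (n : ℕ),
      1 / Cn n ≤ (m (cylPt X x n)).toReal /
        Real.exp (-(n * seqPressure X (fun n' y => Real.exp (birk σ htil n' y))) + birk σ htil n x) ∧
      (m (cylPt X x n)).toReal /
        Real.exp (-(n * seqPressure X (fun n' y => Real.exp (birk σ htil n' y))) + birk σ htil n x)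
        ≤ Cn n) :
    (∀ (x : X) (n : ℕ),
      1 / (Cn n * C) ≤ f n x / Real.exp (birk σ
        (fun y => htil y - seqPressure X (fun n' z => Real.exp (birk σ htil n' z)) + seqPressure X f) n x) ∧
      f n x / Real.exp (birk σ
        (fun y => htil y - seqPressure X (fun n' z => Real.exp (birk σ htil n' z)) + seqPressure X f) n x)
        ≤ Cn n * C) ∧ AsympAdd X σ f := by
  set P1 := seqPressure X f with hP1def
  set P2 := seqPressure X (fun n' y => Real.exp (birk σ htil n' y)) with hP2def
  have key : ∀ (x : X) (n : ℕ),
      1 / (Cn n * C) ≤ f n x / Real.exp (birk σ (fun y => htil y - P2 + P1) n x) ∧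
      f n x / Real.exp (birk σ (fun y => htil y - P2 + P1) n x) ≤ Cn n * C := by
    intro x n
    have hb : birk σ (fun y => htil y - P2 + P1) n x
        = birk σ htil n x - n * P2 + n * P1 := by
      simp only [birk, Finset.sum_add_distrib, Finset.sum_sub_distrib, Finset.sum_const,
        Finset.card_range, nsmul_eq_mul]
    rw [hb]
    obtain ⟨h1, h2⟩ := hGibbs x n
    obtain ⟨h3, h4⟩ := hwG x n
    set M := (m (cylPt X x n)).toReal with hMdef
    have hfp := hfpos n x
    have hA : 0 < Real.exp (-(n * P1)) * f n x := by positivity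
    have hB : 0 < Real.exp (-(n * P2) + birk σ htil n x) := Real.exp_pos _
    rw [div_le_div_iff₀ hCpos hA, one_mul] at h1
    rw [div_le_iff₀ hA] at h2
    rw [div_le_div_iff₀ (hCn n) hB, one_mul] at h3
    rw [div_le_iff₀ hB] at h4
    have hexp : Real.exp (birk σ htil n x - n * P2 + n * P1)
        = Real.exp (n * P1) * Real.exp (-(n * P2) + birk σ htil n x) := by
      rw [← Real.exp_add]; congr 1; ring
    have hAB : f n x / Real.exp (birk σ htil n x - ↑n * P2 + ↑n * P1)
        = (Real.exp (-(↑n * P1)) * f n x) / Real.exp (-(↑n * P2) + birk σ htil n x) := by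
      rw [hexp, Real.exp_neg]
      field_simp
    constructor
    · rw [hAB, div_le_div_iff₀ (mul_pos (hCn n) hCpos) hB, one_mul]
      nlinarith [mul_le_mul_of_nonneg_right h2 (hCn n).le]
    · rw [hAB, div_le_iff₀ hB]
      nlinarith [mul_le_mul_of_nonneg_right h4 hCpos.le]
  refine ⟨key, ?_⟩
  intro ε hε
  refine ⟨fun y => htil y - P2 + P1, (hhtil.sub continuous_const).add continuous_const, ?_⟩
  have hbound : ∀ (n : ℕ) (x : X),
      |Real.log (f n x) - birk σ (fun y => htil y - P2 + P1) n x| ≤ |Real.log (Cn n * C)| := by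
    intro n x
    obtain ⟨k1, k2⟩ := key x n
    have hfp := hfpos n x
    have hCC : 0 < Cn n * C := mul_pos (hCn n) hCpos
    have hrpos : 0 < f n x / Real.exp (birk σ (fun y => htil y - P2 + P1) n x) := by positivity
    have he : Real.log (f n x) - birk σ (fun y => htil y - P2 + P1) n x
        = Real.log (f n x / Real.exp (birk σ (fun y => htil y - P2 + P1) n x)) := by
      rw [Real.log_div hfp.ne' (Real.exp_pos _).ne', Real.log_exp]
    rw [he]
    have l1 : Real.log (f n x / Real.exp (birk σ (fun y => htil y - P2 + P1) n x))
        ≤ Real.log (Cn n * C) := Real.log_le_log hrpos k2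
    have l2 : Real.log (1 / (Cn n * C))
        ≤ Real.log (f n x / Real.exp (birk σ (fun y => htil y - P2 + P1) n x)) :=
      Real.log_le_log (by positivity) k1
    rw [one_div, Real.log_inv] at l2
    have := le_abs_self (Real.log (Cn n * C))
    have := neg_abs_le (Real.log (Cn n * C))
    rw [abs_le]
    constructor <;> linarith
  have hg0 : ∀ n : ℕ, 0 ≤ (1 / (n : ℝ)) * ⨆ x : X,
      |Real.log (f n x) - birk σ (fun y => htil y - P2 + P1) n x| := by
    intro n
    have : (0:ℝ) ≤ 1 / (n : ℝ) := by positivity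
    exact mul_nonneg this (Real.iSup_nonneg fun x => abs_nonneg _)
  have hgle : ∀ n : ℕ, (1 / (n : ℝ)) * ⨆ x : X,
      |Real.log (f n x) - birk σ (fun y => htil y - P2 + P1) n x|
      ≤ (1 / (n : ℝ)) * |Real.log (Cn n * C)| := by
    intro n
    have : (0:ℝ) ≤ 1 / (n : ℝ) := by positivity
    exact mul_le_mul_of_nonneg_left (Real.iSup_le (hbound n) (abs_nonneg _)) this
  have hC0 : Tendsto (fun n : ℕ => (1 / (n : ℝ)) * Real.log C) atTop (𝓝 0) := by
    have := tendsto_const_div_atTop_nhds_zero_nat (Real.log C)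
    simpa [div_eq_mul_inv, one_div, mul_comm] using this
  have hsum : Tendsto (fun n : ℕ => (1 / (n : ℝ)) * Real.log (Cn n * C)) atTop (𝓝 0) := by
    have h := hCnlim.add hC0
    rw [add_zero] at h
    refine h.congr fun n => ?_
    rw [Real.log_mul (hCn n).ne' hCpos.ne', mul_add]
  have habs : Tendsto (fun n : ℕ => (1 / (n : ℝ)) * |Real.log (Cn n * C)|) atTop (𝓝 0) := by
    have h := hsum.abs
    rw [abs_zero] at h
    refine h.congr fun n => ?_
    rw [abs_mul, abs_of_nonneg (by positivity : (0:ℝ) ≤ 1 / (n : ℝ))]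
  have hlim : Tendsto (fun n : ℕ => (1 / (n : ℝ)) * ⨆ x : X,
      |Real.log (f n x) - birk σ (fun y => htil y - P2 + P1) n x|) atTop (𝓝 0) :=
    squeeze_zero hg0 hgle habs
  rw [hlim.limsup_eq]
  exact hε
end

section
/- Let $(X,\sigma_X)$ be an irreducible one-sided shift of finite type, $Y$ a subshift, $\pi: X\to Y$ a one-block factor map, $f \in C(X)$, and suppose $\mu$ is a $\sigma_X$-invariant weak Gibbs measure for $f$, i.e. there exist $C_n > 0$ with $\frac1n \log C_n \to 0$ and $1/C_n \le \mu[x_1\dots x_n]/e^{-nP(f)+(S_nf)(x)} \le C_n$ for all $x$. Then the pushforward $\pi\mu$ is a $\sigma_Y$-invariant weak Gibbs measure for the subadditive sequence $\mathcal G = \{\log g_n\}$ on $Y$: $P(f) = P(\mathcal G)$ and $\frac{1}{C_n M_n} \le \pi\mu[y_1\dots y_n]/(e^{-nP(\mathcal G)}g_n(y)) \le C_n M_n$ for all $y \in [y_1\dots y_n]$, where $M_n$ are the variation constants of $f$. -/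
open Filter Topology MeasureTheory

/-- `X` is a one-step shift of finite type, given by a transition relation on symbols. -/
def IsSFT {k : ℕ} (X : Set (ℕ → Fin k)) : Prop :=
  ∃ A : Fin k → Fin k → Prop, X = {x | ∀ i : ℕ, A (x i) (x (i + 1))}

/-- `X` is an irreducible subshift: any two allowable words can be joined. -/
def IrreducibleSubshift {k : ℕ} (X : Set (ℕ → Fin k)) : Prop :=
  ∀ (n m : ℕ) (u : Fin n → Fin k) (v : Fin m → Fin k), WordIn X u → WordIn X v →
    ∃ (q : ℕ) (w : Fin q → Fin k), WordIn X (Fin.append (Fin.append u w) v)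

/-- Measure-theoretic entropy of a measure on a one-sided subshift, computed with the
canonical generating partition into cylinders. -/
noncomputable def mEntropy {k : ℕ} (X : Set (ℕ → Fin k)) (μ : MeasureTheory.Measure X) : ℝ :=
  Filter.liminf
    (fun n : ℕ => (1 / (n : ℝ)) *
      ∑ u : Fin n → Fin k, Real.negMulLog ((μ (cylSet X u)).toReal))
    Filter.atTop

-- The standard metric on the full shift: `d(x,y) = (1/2)^{min{i : x_i ≠ y_i}}`.
open Classical in
noncomputable def dSeq {k : ℕ} (x y : ℕ → Fin k) : ℝ :=
  if x = y then 0 else (1 / 2 : ℝ) ^ (sInf {i : ℕ | x i ≠ y i})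

/-- `P_n(σ, π, f, δ)(y)`: supremum of `∑_{x ∈ E} e^{S_n f(x)}` over `(n,δ)`-separated
subsets `E` of the fiber `π⁻¹(y)`. -/
noncomputable def relPn {k l : ℕ} (X : Set (ℕ → Fin k)) (σ : X → X)
    (πs : X → (ℕ → Fin l)) (f : X → ℝ) (n : ℕ) (δ : ℝ) (y : ℕ → Fin l) : ℝ :=
  sSup {s : ℝ | ∃ E : Finset X, (∀ x ∈ E, πs x = y) ∧
    (∀ x ∈ E, ∀ x' ∈ E, x ≠ x' →
      ∃ i < n, δ ≤ dSeq ((σ^[i] x : X) : ℕ → Fin k) ((σ^[i] x' : X) : ℕ → Fin k)) ∧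
    s = ∑ x ∈ E, Real.exp (birk σ f n x)}

/-- The relative pressure function `P(σ, π, f) : (ℕ → Fin l) → ℝ` of `f`. -/
noncomputable def relP {k l : ℕ} (X : Set (ℕ → Fin k)) (σ : X → X)
    (πs : X → (ℕ → Fin l)) (f : X → ℝ) (y : ℕ → Fin l) : ℝ :=
  ⨆ δ : {δ : ℝ // 0 < δ},
    Filter.limsup (fun n : ℕ => (1 / (n : ℝ)) * Real.log (relPn X σ πs f n δ.1 y))
      Filter.atTop

/-- `g_n(y) = sup_{E_n(y)} ∑_{x ∈ E_n(y)} e^{S_n f(x)}`, where `E_n(y)` consists of exactly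
one point from each cylinder `[x_1…x_n]` of `X` whose word is mapped by the one-block map
to `y_1…y_n`. -/
noncomputable def gfun {k l : ℕ} (X : Set (ℕ → Fin k)) (σ : X → X)
    (πs : X → (ℕ → Fin l)) (f : X → ℝ) (n : ℕ) (y : ℕ → Fin l) : ℝ :=
  sSup {s : ℝ | ∃ E : Finset X,
    (∀ x ∈ E, ∀ i : Fin n, πs x (i : ℕ) = y (i : ℕ)) ∧
    (∀ x ∈ E, ∀ x' ∈ E, (∀ i : Fin n, (x : ℕ → Fin k) (i : ℕ) = (x' : ℕ → Fin k) (i : ℕ)) →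
      x = x') ∧
    (∀ u : Fin n → Fin k,
      (∃ z : X, (∀ i : Fin n, (z : ℕ → Fin k) (i : ℕ) = u i) ∧
        ∀ i : Fin n, πs z (i : ℕ) = y (i : ℕ)) →
      ∃ x ∈ E, ∀ i : Fin n, (x : ℕ → Fin k) (i : ℕ) = u i) ∧
    s = ∑ x ∈ E, Real.exp (birk σ f n x)}

/-- The variation constant `M_n` of `f`:
`M_n = sup { e^{S_n f(x)} / e^{S_n f(x')} : x_i = x'_i for 1 ≤ i ≤ n }`. -/
noncomputable def varConst {k : ℕ} (X : Set (ℕ → Fin k)) (σ : X → X) (f : X → ℝ)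
    (n : ℕ) : ℝ :=
  sSup {r : ℝ | ∃ x x' : X, (∀ i : Fin n, (x : ℕ → Fin k) (i : ℕ) = (x' : ℕ → Fin k) (i : ℕ)) ∧
    r = Real.exp (birk σ f n x) / Real.exp (birk σ f n x')}

/-- `min_{0 ≤ q ≤ p} min_x e^{S_q f (x)}`. -/
noncomputable def minConst {k : ℕ} (X : Set (ℕ → Fin k)) (σ : X → X) (f : X → ℝ)
    (p : ℕ) : ℝ :=
  sInf {r : ℝ | ∃ q ≤ p, ∃ x : X, r = Real.exp (birk σ f q x)}

/-!
Let `A_n = ∑_u sup_{[u]} e^{S_n f}` be the partition sums of `f` on `X`, and group the words `u`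
by their image `v = τ ∘ u` under the one-block map. The fibre sum
`∑_{τ ∘ u = v} sup_{[u]} e^{S_n f}` lies between `g_n(y)` and `M_n g_n(y)` for every `y ∈ [v]`,
since `g_n(y)` evaluates `e^{S_n f}` at one point of each cylinder of the fibre and `M_n` bounds
the oscillation of `e^{S_n f}` on a cylinder. So the partition sums of `𝓖` on `Y` are within a
factor `M_n` of `A_n`, and as `M_n` grows subexponentially the two pressures coincide.
Likewise `πμ[y_1…y_n]` is the sum of `μ[u]` over the same fibre, and the Gibbs bounds for the
`μ[u]` add up to Gibbs bounds for `πμ`, at the cost of the extra factor `M_n`.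
-/

section Birkhoff

variable {k : ℕ} {X : Set (ℕ → Fin k)} (σ : X → X) (f : X → ℝ)

lemma coe_iterate_apply (hσ : ∀ x : X, (σ x : ℕ → Fin k) = shiftMap (x : ℕ → Fin k))
    (i : ℕ) (x : X) (j : ℕ) : ((σ^[i] x : X) : ℕ → Fin k) j = (x : ℕ → Fin k) (j + i) := by
  induction i generalizing x with
  | zero => rfl
  | succ i ih => rw [Function.iterate_succ_apply, ih, hσ]; rfl

lemma abs_birk_le {b : ℝ} (hb : ∀ x, |f x| ≤ b) (n : ℕ) (x : X) : |birk σ f n x| ≤ n * b :=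
  calc |birk σ f n x| ≤ ∑ i ∈ Finset.range n, |f (σ^[i] x)| := Finset.abs_sum_le_sum_abs _ _
    _ ≤ ∑ _i ∈ Finset.range n, b := Finset.sum_le_sum fun i _ => hb _
    _ = n * b := by simp

lemma exists_abs_le_of_continuous (hX : IsClosed X) (hf : Continuous f) :
    ∃ b : ℝ, ∀ x, |f x| ≤ b := by
  have : CompactSpace X := isCompact_iff_compactSpace.mp hX.isCompact
  obtain ⟨b, hb⟩ := isCompact_univ.exists_bound_of_continuousOn hf.continuousOn
  exact ⟨b, fun x => hb x (Set.mem_univ x)⟩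

-- `PiNat.metricSpace` induces the product topology, so `f` is uniformly continuous for it.
lemma exists_abs_sub_le_of_agree (hX : IsClosed X) (hf : Continuous f) {ε : ℝ} (hε : 0 < ε) :
    ∃ N : ℕ, ∀ x x' : X, (∀ i < N, (x : ℕ → Fin k) i = (x' : ℕ → Fin k) i) →
      |f x - f x'| ≤ ε := by
  let _ : MetricSpace (ℕ → Fin k) := PiNat.metricSpace
  have : CompactSpace X := isCompact_iff_compactSpace.mp hX.isCompact
  obtain ⟨δ, hδ, hfδ⟩ :=
    Metric.uniformContinuous_iff.mp (CompactSpace.uniformContinuous_of_continuous hf) ε hε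
  obtain ⟨N, hN⟩ := exists_pow_lt_of_lt_one hδ (by norm_num : (1 / 2 : ℝ) < 1)
  refine ⟨N, fun x x' h => ?_⟩
  have hxx' : dist x x' < δ := (PiNat.mem_cylinder_iff_dist_le.1 h).trans_lt hN
  exact (abs_sub_lt_iff.2 (abs_sub_lt_iff.1 (hfδ hxx'))).le

lemma birk_sub_le_of_agree (hσ : ∀ x : X, (σ x : ℕ → Fin k) = shiftMap (x : ℕ → Fin k))
    {b ε : ℝ} (hb : ∀ x, |f x| ≤ b) (hε : 0 ≤ ε) {N : ℕ}
    (hN : ∀ x x' : X, (∀ i < N, (x : ℕ → Fin k) i = (x' : ℕ → Fin k) i) → |f x - f x'| ≤ ε)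
    {n : ℕ} {x x' : X} (h : ∀ i : Fin n, (x : ℕ → Fin k) i = (x' : ℕ → Fin k) i) :
    birk σ f n x - birk σ f n x' ≤ n * ε + N * (2 * b) := by
  have hb0 : 0 ≤ b := (abs_nonneg _).trans (hb x)
  have hhead : ∀ i, i + N ≤ n → f (σ^[i] x) - f (σ^[i] x') ≤ ε := fun i hi =>
    (le_abs_self _).trans <| hN _ _ fun j hj => by
      rw [coe_iterate_apply σ hσ, coe_iterate_apply σ hσ]; exact h ⟨j + i, by omega⟩
  have htail : ∀ i, f (σ^[i] x) - f (σ^[i] x') ≤ 2 * b := fun i => by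
    linarith [abs_le.1 (hb (σ^[i] x)), abs_le.1 (hb (σ^[i] x'))]
  rw [birk, birk, ← Finset.sum_sub_distrib, ← Finset.sum_range_add_sum_Ico _ (Nat.sub_le n N)]
  calc _ ≤ ∑ _i ∈ Finset.range (n - N), ε + ∑ _i ∈ Finset.Ico (n - N) n, 2 * b := by
        gcongr with i hi i
        · exact hhead i (by simp only [Finset.mem_range] at hi; omega)
        · exact htail i
    _ ≤ n * ε + N * (2 * b) := by
        simp only [Finset.sum_const, Finset.card_range, Nat.card_Ico, nsmul_eq_mul]
        gcongr
        · exact Nat.sub_le n N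
        · omega

end Birkhoff

section Variation

variable {k : ℕ} {X : Set (ℕ → Fin k)} (σ : X → X) (f : X → ℝ)

lemma varConst_le_exp {n : ℕ} {c : ℝ}
    (h : ∀ x x' : X, (∀ i : Fin n, (x : ℕ → Fin k) i = (x' : ℕ → Fin k) i) →
      birk σ f n x - birk σ f n x' ≤ c) :
    varConst X σ f n ≤ Real.exp c := by
  refine Real.sSup_le ?_ (Real.exp_pos c).le
  rintro r ⟨x, x', hxx', rfl⟩
  rw [← Real.exp_sub]
  exact Real.exp_le_exp.2 (h x x' hxx')

lemma exp_birk_le_varConst_mul {b : ℝ} (hb : ∀ x, |f x| ≤ b) {n : ℕ} {x x' : X}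
    (h : ∀ i : Fin n, (x : ℕ → Fin k) i = (x' : ℕ → Fin k) i) :
    Real.exp (birk σ f n x) ≤ varConst X σ f n * Real.exp (birk σ f n x') := by
  rw [← div_le_iff₀ (Real.exp_pos _)]
  refine le_csSup ⟨Real.exp (2 * (n * b)), ?_⟩ ⟨x, x', h, rfl⟩
  rintro r ⟨z, z', -, rfl⟩
  rw [← Real.exp_sub]
  exact Real.exp_le_exp.2 (by
    linarith [abs_le.1 (abs_birk_le σ f hb n z), abs_le.1 (abs_birk_le σ f hb n z')])

lemma one_le_varConst [Nonempty X] {b : ℝ} (hb : ∀ x, |f x| ≤ b) (n : ℕ) :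
    1 ≤ varConst X σ f n := by
  let x : X := Classical.arbitrary X
  exact (le_mul_iff_one_le_left (Real.exp_pos _)).1
    (exp_birk_le_varConst_mul σ f hb (x := x) (x' := x) fun _ => rfl)

lemma varConst_pos [Nonempty X] {b : ℝ} (hb : ∀ x, |f x| ≤ b) (n : ℕ) :
    0 < varConst X σ f n :=
  zero_lt_one.trans_le (one_le_varConst σ f hb n)

lemma tendsto_log_varConst_div [Nonempty X] (hX : IsClosed X)
    (hσ : ∀ x : X, (σ x : ℕ → Fin k) = shiftMap (x : ℕ → Fin k)) (hf : Continuous f) :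
    Tendsto (fun n : ℕ => (1 / (n : ℝ)) * Real.log (varConst X σ f n)) atTop (𝓝 0) := by
  obtain ⟨b, hb⟩ := exists_abs_le_of_continuous f hX hf
  refine tendsto_order.2 ⟨fun a ha => Eventually.of_forall fun n => ha.trans_le ?_, fun a ha => ?_⟩
  · exact mul_nonneg (by positivity) (Real.log_nonneg (one_le_varConst σ f hb n))
  obtain ⟨N, hN⟩ := exists_abs_sub_le_of_agree f hX hf (half_pos ha)
  have hM : ∀ n : ℕ, Real.log (varConst X σ f n) ≤ n * (a / 2) + N * (2 * b) := fun n =>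
    (Real.log_le_iff_le_exp (varConst_pos σ f hb n)).2 <|
      varConst_le_exp σ f fun _ _ h => birk_sub_le_of_agree σ f hσ hb (half_pos ha).le hN h
  filter_upwards [(tendsto_const_div_atTop_nhds_zero_nat (N * (2 * b))).eventually
    (gt_mem_nhds (half_pos ha)), eventually_gt_atTop 0] with n hC hn
  calc (1 / (n : ℝ)) * Real.log (varConst X σ f n)
      ≤ (1 / (n : ℝ)) * (n * (a / 2) + N * (2 * b)) := by gcongr; exact hM n
    _ = a / 2 + N * (2 * b) / n := by field_simp
    _ < a := by linarith

end Variation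

noncomputable def cylSup {k : ℕ} (X : Set (ℕ → Fin k)) (σ : X → X) (f : X → ℝ) {n : ℕ}
    (u : Fin n → Fin k) : ℝ :=
  sSup ((fun x => Real.exp (birk σ f n x)) '' cylSet X u)

noncomputable def fiberSup {k l : ℕ} (X : Set (ℕ → Fin k)) (σ : X → X) (f : X → ℝ)
    (τ : Fin k → Fin l) {n : ℕ} (v : Fin n → Fin l) : ℝ :=
  ∑ u with τ ∘ u = v, cylSup X σ f u

section CylinderSums

variable {k l : ℕ} {X : Set (ℕ → Fin k)} (σ : X → X) (f : X → ℝ) (τ : Fin k → Fin l)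

lemma cylSup_nonneg {n : ℕ} (u : Fin n → Fin k) : 0 ≤ cylSup X σ f u :=
  Real.sSup_nonneg (by rintro _ ⟨x, -, rfl⟩; positivity)

lemma cylSup_eq_zero_of_eq_empty {n : ℕ} {u : Fin n → Fin k} (h : cylSet X u = ∅) :
    cylSup X σ f u = 0 := by
  rw [cylSup, h, Set.image_empty, Real.sSup_empty]

lemma exp_birk_le_cylSup {b : ℝ} (hb : ∀ x, |f x| ≤ b) {n : ℕ} {u : Fin n → Fin k} {x : X}
    (hx : x ∈ cylSet X u) : Real.exp (birk σ f n x) ≤ cylSup X σ f u := by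
  refine le_csSup ⟨Real.exp (n * b), ?_⟩ ⟨x, hx, rfl⟩
  rintro _ ⟨z, -, rfl⟩
  exact Real.exp_le_exp.2 (abs_le.1 (abs_birk_le σ f hb n z)).2

lemma cylSup_le_varConst_mul {b : ℝ} (hb : ∀ x, |f x| ≤ b) {n : ℕ} {u : Fin n → Fin k} {x : X}
    (hx : x ∈ cylSet X u) : cylSup X σ f u ≤ varConst X σ f n * Real.exp (birk σ f n x) := by
  have : Nonempty X := ⟨x⟩
  refine Real.sSup_le ?_ (mul_nonneg ((varConst_pos σ f hb n).le) (by positivity))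
  rintro _ ⟨z, hz, rfl⟩
  exact exp_birk_le_varConst_mul σ f hb fun i => (hz i).trans (hx i).symm

lemma fiberSup_nonneg {n : ℕ} (v : Fin n → Fin l) : 0 ≤ fiberSup X σ f τ v :=
  Finset.sum_nonneg fun u _ => cylSup_nonneg σ f u

lemma fiberSup_pos {b : ℝ} (hb : ∀ x, |f x| ≤ b) {n : ℕ} {v : Fin n → Fin l} {x : X}
    (hx : ∀ i : Fin n, τ ((x : ℕ → Fin k) i) = v i) : 0 < fiberSup X σ f τ v := by
  let w : Fin n → Fin k := fun i => (x : ℕ → Fin k) i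
  calc 0 < Real.exp (birk σ f n x) := Real.exp_pos _
    _ ≤ cylSup X σ f w := exp_birk_le_cylSup σ f hb fun _ => rfl
    _ ≤ fiberSup X σ f τ v := Finset.single_le_sum (fun u _ => cylSup_nonneg σ f u)
          (Finset.mem_filter.2 ⟨Finset.mem_univ _, funext hx⟩)

lemma sum_fiberSup (n : ℕ) :
    ∑ v : Fin n → Fin l, fiberSup X σ f τ v = ∑ u : Fin n → Fin k, cylSup X σ f u :=
  Finset.sum_fiberwise _ _ _

lemma sum_exp_birk_le_fiberSup {b : ℝ} (hb : ∀ x, |f x| ≤ b) {n : ℕ} {y : ℕ → Fin l}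
    {v : Fin n → Fin l} (hy : ∀ i : Fin n, y i = v i) {E : Finset X}
    (hE : ∀ x ∈ E, ∀ i : Fin n, τ ((x : ℕ → Fin k) i) = y i)
    (hinj : ∀ x ∈ E, ∀ x' ∈ E,
      (∀ i : Fin n, (x : ℕ → Fin k) i = (x' : ℕ → Fin k) i) → x = x') :
    ∑ x ∈ E, Real.exp (birk σ f n x) ≤ fiberSup X σ f τ v := by
  classical
  let w : X → Fin n → Fin k := fun x i => (x : ℕ → Fin k) i
  calc ∑ x ∈ E, Real.exp (birk σ f n x) ≤ ∑ x ∈ E, cylSup X σ f (w x) :=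
        Finset.sum_le_sum fun x _ => exp_birk_le_cylSup σ f hb fun _ => rfl
    _ = ∑ u ∈ E.image w, cylSup X σ f u :=
        (Finset.sum_image fun x hx x' hx' h => hinj x hx x' hx' (congrFun h)).symm
    _ ≤ fiberSup X σ f τ v := by
        refine Finset.sum_le_sum_of_subset_of_nonneg ?_ fun u _ _ => cylSup_nonneg σ f u
        rintro _ hu
        obtain ⟨x, hx, rfl⟩ := Finset.mem_image.1 hu
        exact Finset.mem_filter.2 ⟨Finset.mem_univ _, funext fun i => (hE x hx i).trans (hy i)⟩

lemma gfun_le_fiberSup {b : ℝ} (hb : ∀ x, |f x| ≤ b) {n : ℕ} {y : ℕ → Fin l}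
    {v : Fin n → Fin l} (hy : ∀ i : Fin n, y i = v i) :
    gfun X σ (fun x => τ ∘ x) f n y ≤ fiberSup X σ f τ v := by
  refine Real.sSup_le ?_ (fiberSup_nonneg σ f τ v)
  rintro _ ⟨E, hE, hinj, -, rfl⟩
  exact sum_exp_birk_le_fiberSup σ f τ hb hy hE hinj

-- Choosing one point in each nonempty cylinder of the fibre gives an admissible set for `g_n(y)`.
lemma fiberSup_le_varConst_mul_gfun [Nonempty X] {b : ℝ} (hb : ∀ x, |f x| ≤ b) {n : ℕ}
    {y : ℕ → Fin l} {v : Fin n → Fin l} (hy : ∀ i : Fin n, y i = v i) :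
    fiberSup X σ f τ v ≤ varConst X σ f n * gfun X σ (fun x => τ ∘ x) f n y := by
  classical
  let F := Finset.univ.filter fun u : Fin n → Fin k => τ ∘ u = v ∧ (cylSet X u).Nonempty
  choose! rep hrep using fun u (hu : u ∈ F) => (Finset.mem_filter.1 hu).2.2
  have hF : ∀ u ∈ F, τ ∘ u = v := fun u hu => (Finset.mem_filter.1 hu).2.1
  have hsum : fiberSup X σ f τ v = ∑ u ∈ F, cylSup X σ f u := by
    refine (Finset.sum_subset (fun u hu => Finset.mem_filter.2 ⟨Finset.mem_univ _, hF u hu⟩)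
      fun u hu hu' => cylSup_eq_zero_of_eq_empty σ f ?_).symm
    refine Set.not_nonempty_iff_eq_empty.1 fun hne => hu' ?_
    exact Finset.mem_filter.2 ⟨Finset.mem_univ _, (Finset.mem_filter.1 hu).2, hne⟩
  have hword : ∀ u ∈ F, ∀ u' ∈ F,
      (∀ i : Fin n, ((rep u : X) : ℕ → Fin k) i = ((rep u' : X) : ℕ → Fin k) i) → u = u' :=
    fun u hu u' hu' h => funext fun i => ((hrep u hu i).symm.trans (h i)).trans (hrep u' hu' i)
  have hgE : ∑ x ∈ F.image rep, Real.exp (birk σ f n x) ≤ gfun X σ (fun x => τ ∘ x) f n y := by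
    refine le_csSup ⟨fiberSup X σ f τ v, ?_⟩ ⟨F.image rep, ?_, ?_, ?_, rfl⟩
    · rintro _ ⟨E, hE, hinj, -, rfl⟩
      exact sum_exp_birk_le_fiberSup σ f τ hb hy hE hinj
    · simp only [Finset.mem_image]
      rintro _ ⟨u, hu, rfl⟩ i
      simp only [Function.comp_apply, hrep u hu i, hy]
      exact congrFun (hF u hu) i
    · simp only [Finset.mem_image]
      rintro _ ⟨u, hu, rfl⟩ _ ⟨u', hu', rfl⟩ h
      rw [hword u hu u' hu' h]
    · rintro u ⟨z, hz, hzy⟩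
      have hu : u ∈ F := Finset.mem_filter.2 ⟨Finset.mem_univ _,
        funext fun i => by simp only [Function.comp_apply, ← hz i, ← hy]; exact hzy i, z, hz⟩
      exact ⟨rep u, Finset.mem_image_of_mem rep hu, hrep u hu⟩
  calc fiberSup X σ f τ v = ∑ u ∈ F, cylSup X σ f u := hsum
    _ ≤ ∑ u ∈ F, varConst X σ f n * Real.exp (birk σ f n (rep u)) :=
        Finset.sum_le_sum fun u hu => cylSup_le_varConst_mul σ f hb (hrep u hu)
    _ = varConst X σ f n * ∑ x ∈ F.image rep, Real.exp (birk σ f n x) := by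
        rw [← Finset.mul_sum, Finset.sum_image fun u hu u' hu' h =>
          hword u hu u' hu' fun i => by rw [h]]
    _ ≤ varConst X σ f n * gfun X σ (fun x => τ ∘ x) f n y :=
        mul_le_mul_of_nonneg_left hgE ((varConst_pos σ f hb n).le)

end CylinderSums

lemma limsup_add_of_tendsto_zero {ι : Type*} {F : Filter ι} [F.NeBot] {u v : ι → ℝ}
    (hu : IsBoundedUnder (· ≤ ·) F u) (hu' : IsBoundedUnder (· ≥ ·) F u)
    (hv : Tendsto v F (𝓝 0)) : limsup (u + v) F = limsup u F := by
  refine le_antisymm ?_ ?_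
  · simpa [hv.limsup_eq] using
      limsup_add_le hu' hu hv.isBoundedUnder_ge.isCoboundedUnder_le hv.isBoundedUnder_le
  · simpa [hv.liminf_eq] using
      le_limsup_add hu hu'.isCoboundedUnder_le hv.isBoundedUnder_le hv.isBoundedUnder_ge

lemma limsup_log_div_eq_of_le_mul {a c M : ℕ → ℝ} (hc : ∀ n, 0 < c n) (hca : ∀ n, c n ≤ a n)
    (haM : ∀ n, a n ≤ M n * c n)
    (hM : Tendsto (fun n : ℕ => (1 / (n : ℝ)) * Real.log (M n)) atTop (𝓝 0)) {b B : ℝ}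
    (hlo : ∀ n : ℕ, Real.exp (-(n * b)) ≤ a n) (hhi : ∀ n : ℕ, a n ≤ Real.exp (n * B)) :
    limsup (fun n : ℕ => (1 / (n : ℝ)) * Real.log (a n)) atTop =
      limsup (fun n : ℕ => (1 / (n : ℝ)) * Real.log (c n)) atTop := by
  have ha : ∀ n, 0 < a n := fun n => (hc n).trans_le (hca n)
  have hMpos : ∀ n, 0 < M n := fun n => pos_of_mul_pos_left ((ha n).trans_le (haM n)) (hc n).le
  let d := fun n : ℕ => (1 / (n : ℝ)) * (Real.log (c n) - Real.log (a n))
  have hd : Tendsto d atTop (𝓝 0) := by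
    refine tendsto_of_tendsto_of_tendsto_of_le_of_le (by simpa only [neg_zero] using hM.neg)
      tendsto_const_nhds (fun n => ?_) fun n => mul_nonpos_of_nonneg_of_nonpos (by positivity)
        (by linarith [Real.log_le_log (hc n) (hca n)])
    have := Real.log_le_log (ha n) (haM n)
    rw [Real.log_mul (hMpos n).ne' (hc n).ne'] at this
    show -(1 / (n : ℝ) * Real.log (M n)) ≤ 1 / (n : ℝ) * (Real.log (c n) - Real.log (a n))
    rw [← mul_neg]
    exact mul_le_mul_of_nonneg_left (by linarith) (by positivity)
  have hbdd : IsBoundedUnder (· ≤ ·) atTop (fun n : ℕ => (1 / (n : ℝ)) * Real.log (a n)) :=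
    isBoundedUnder_of_eventually_le <| (eventually_ge_atTop 1).mono fun n hn => by
      rw [one_div, inv_mul_le_iff₀ (by positivity)]
      exact (Real.log_le_iff_le_exp (ha n)).2 (hhi n)
  have hbdd' : IsBoundedUnder (· ≥ ·) atTop (fun n : ℕ => (1 / (n : ℝ)) * Real.log (a n)) :=
    isBoundedUnder_of_eventually_ge <| (eventually_ge_atTop 1).mono fun n hn => by
      rw [one_div, le_inv_mul_iff₀ (by positivity), mul_neg]
      exact (Real.le_log_iff_exp_le (ha n)).2 (hlo n)
  rw [← limsup_add_of_tendsto_zero hbdd hbdd' hd]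
  congr 1
  ext n
  simp only [Pi.add_apply, d]
  ring

section Pressure

variable {k l : ℕ} {X : Set (ℕ → Fin k)} {Y : Set (ℕ → Fin l)} (σ : X → X) (f : X → ℝ)
  (τ : Fin k → Fin l)

lemma exp_neg_le_sum_cylSup [Nonempty X] {b : ℝ} (hb : ∀ x, |f x| ≤ b) (n : ℕ) :
    Real.exp (-(n * b)) ≤ ∑ u : Fin n → Fin k, cylSup X σ f u := by
  let x : X := Classical.arbitrary X
  calc Real.exp (-(n * b)) ≤ Real.exp (birk σ f n x) :=
        Real.exp_le_exp.2 (abs_le.1 (abs_birk_le σ f hb n x)).1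
    _ ≤ cylSup X σ f (fun i : Fin n => (x : ℕ → Fin k) i) := exp_birk_le_cylSup σ f hb fun _ => rfl
    _ ≤ _ := Finset.single_le_sum (fun u _ => cylSup_nonneg σ f u) (Finset.mem_univ _)

lemma sum_cylSup_le_exp (hk : 0 < k) {b : ℝ} (hb : ∀ x, |f x| ≤ b) (n : ℕ) :
    ∑ u : Fin n → Fin k, cylSup X σ f u ≤ Real.exp (n * (Real.log k + b)) := by
  have hcyl : ∀ u : Fin n → Fin k, cylSup X σ f u ≤ Real.exp (n * b) := fun u => by
    refine Real.sSup_le ?_ (Real.exp_pos _).le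
    rintro _ ⟨z, -, rfl⟩
    exact Real.exp_le_exp.2 (abs_le.1 (abs_birk_le σ f hb n z)).2
  calc ∑ u : Fin n → Fin k, cylSup X σ f u ≤ ∑ _u : Fin n → Fin k, Real.exp (n * b) :=
        Finset.sum_le_sum fun u _ => hcyl u
    _ = Real.exp (n * (Real.log k + b)) := by
        rw [mul_add, Real.exp_add, Real.exp_nat_mul (Real.log k),
          Real.exp_log (by exact_mod_cast hk)]
        simp

lemma sSup_gfun_image_le_fiberSup {b : ℝ} (hb : ∀ x, |f x| ≤ b) {n : ℕ} (v : Fin n → Fin l) :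
    sSup ((fun y : Y => gfun X σ (fun x => τ ∘ x) f n y) '' cylSet Y v) ≤ fiberSup X σ f τ v :=
  Real.sSup_le (by rintro _ ⟨y, hy, rfl⟩; exact gfun_le_fiberSup σ f τ hb hy)
    (fiberSup_nonneg σ f τ v)

lemma fiberSup_le_varConst_mul_sSup_gfun [Nonempty X] {b : ℝ} (hb : ∀ x, |f x| ≤ b) (π : X → Y)
    (hπ : ∀ x, (π x : ℕ → Fin l) = τ ∘ x) {n : ℕ} (v : Fin n → Fin l) :
    fiberSup X σ f τ v ≤
      varConst X σ f n * sSup ((fun y : Y => gfun X σ (fun x => τ ∘ x) f n y) '' cylSet Y v) := by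
  rcases (cylSet Y v).eq_empty_or_nonempty with hY | ⟨y, hy⟩
  · have : fiberSup X σ f τ v = 0 := Finset.sum_eq_zero fun u hu =>
      cylSup_eq_zero_of_eq_empty σ f <| Set.eq_empty_iff_forall_notMem.2 fun x hx => by
        have hπx : π x ∈ cylSet Y v := fun i => by
          rw [hπ, Function.comp_apply, hx i]; exact congrFun (Finset.mem_filter.1 hu).2 i
        rw [hY] at hπx
        exact hπx
    rw [this, hY, Set.image_empty, Real.sSup_empty, mul_zero]
  · calc fiberSup X σ f τ v ≤ varConst X σ f n * gfun X σ (fun x => τ ∘ x) f n y :=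
          fiberSup_le_varConst_mul_gfun σ f τ hb hy
      _ ≤ _ := by
          refine mul_le_mul_of_nonneg_left (le_csSup ⟨fiberSup X σ f τ v, ?_⟩ ⟨y, hy, rfl⟩)
            ((varConst_pos σ f hb n).le)
          rintro _ ⟨y', hy', rfl⟩
          exact gfun_le_fiberSup σ f τ hb hy'

lemma seqPressure_eq_seqPressure_gfun [Nonempty X] (hX : IsClosed X)
    (hσ : ∀ x : X, (σ x : ℕ → Fin k) = shiftMap (x : ℕ → Fin k)) (hf : Continuous f) (π : X → Y)
    (hπ : ∀ x, (π x : ℕ → Fin l) = τ ∘ x) :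
    seqPressure X (fun n x => Real.exp (birk σ f n x)) =
      seqPressure Y (fun n (y : Y) => gfun X σ (fun x => τ ∘ x) f n y) := by
  obtain ⟨b, hb⟩ := exists_abs_le_of_continuous f hX hf
  have hk : 0 < k := ((Classical.arbitrary X : ℕ → Fin k) 0).pos
  let A := fun n => ∑ u : Fin n → Fin k, cylSup X σ f u
  let S := fun n => ∑ v : Fin n → Fin l,
    sSup ((fun y : Y => gfun X σ (fun x => τ ∘ x) f n y) '' cylSet Y v)
  have hSA : ∀ n, S n ≤ A n := fun n => by
    simp only [A, S, ← sum_fiberSup σ f τ n]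
    exact Finset.sum_le_sum fun v _ => sSup_gfun_image_le_fiberSup σ f τ hb v
  have hAS : ∀ n, A n ≤ varConst X σ f n * S n := fun n => by
    simp only [A, S, ← sum_fiberSup σ f τ n, Finset.mul_sum]
    exact Finset.sum_le_sum fun v _ => fiberSup_le_varConst_mul_sSup_gfun σ f τ hb π hπ v
  have hS : ∀ n, 0 < S n := fun n => (mul_pos_iff_of_pos_left (varConst_pos σ f hb n)).1
      (((Real.exp_pos _).trans_le (exp_neg_le_sum_cylSup σ f hb n)).trans_le (hAS n))
  exact limsup_log_div_eq_of_le_mul hS hSA hAS (tendsto_log_varConst_div σ f hX hσ hf)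
    (exp_neg_le_sum_cylSup σ f hb) (sum_cylSup_le_exp σ f hk hb)

end Pressure

section Measure

variable {k l : ℕ} {X : Set (ℕ → Fin k)} {Y : Set (ℕ → Fin l)}

lemma measurableSet_cylSet {n : ℕ} (u : Fin n → Fin k) : MeasurableSet (cylSet X u) := by
  have : cylSet X u = ⋂ i : Fin n, (fun x : X => (x : ℕ → Fin k) i) ⁻¹' {u i} := by
    ext x; simp [cylSet]
  rw [this]
  exact MeasurableSet.iInter fun i =>
    ((measurable_pi_apply _).comp measurable_subtype_coe) (measurableSet_singleton _)

lemma cylPt_eq_cylSet (x : X) (n : ℕ) :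
    cylPt X x n = cylSet X (fun i : Fin n => (x : ℕ → Fin k) i) := by
  ext z; simp [cylPt, cylSet, Fin.forall_iff]

lemma map_cylSet_eq_sum (τ : Fin k → Fin l) (π : X → Y) (hπm : Measurable π)
    (hπ : ∀ x, (π x : ℕ → Fin l) = τ ∘ x) (μ : Measure X) {n : ℕ} (v : Fin n → Fin l) :
    μ.map π (cylSet Y v) = ∑ u with τ ∘ u = v, μ (cylSet X u) := by
  have hpre : π ⁻¹' cylSet Y v = ⋃ u ∈ Finset.univ.filter (fun u => τ ∘ u = v), cylSet X u := by
    ext x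
    simp only [Set.mem_preimage, Set.mem_iUnion, Finset.mem_filter, Finset.mem_univ, true_and,
      exists_prop, cylSet, Set.mem_ofPred_eq, hπ, Function.comp_apply]
    refine ⟨fun h => ⟨fun i => (x : ℕ → Fin k) i, funext h, fun _ => rfl⟩, ?_⟩
    rintro ⟨u, rfl, hu⟩ i
    rw [hu i, Function.comp_apply]
  rw [Measure.map_apply hπm (measurableSet_cylSet v), hpre,
    measure_biUnion_finset _ fun u _ => measurableSet_cylSet u]
  intro u _ u' _ huu'
  exact Set.disjoint_left.2 fun x hx hx' => huu' (funext fun i => (hx i).symm.trans (hx' i))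

variable (σ : X → X) (f : X → ℝ) (μ : Measure X)

lemma measure_cylSet_bounds_of_gibbs {b : ℝ} (hb : ∀ x, |f x| ≤ b) {n : ℕ} {c₁ c₂ : ℝ}
    (hc₁ : 0 ≤ c₁) (hc₂ : 0 ≤ c₂)
    (hμ : ∀ x : X, c₁ * Real.exp (birk σ f n x) ≤ (μ (cylPt X x n)).toReal ∧
      (μ (cylPt X x n)).toReal ≤ c₂ * Real.exp (birk σ f n x)) (u : Fin n → Fin k) :
    c₁ * cylSup X σ f u ≤ varConst X σ f n * (μ (cylSet X u)).toReal ∧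
      (μ (cylSet X u)).toReal ≤ c₂ * cylSup X σ f u := by
  rcases (cylSet X u).eq_empty_or_nonempty with hu | ⟨x, hx⟩
  · simp [hu, cylSup_eq_zero_of_eq_empty σ f hu]
  have : Nonempty X := ⟨x⟩
  obtain rfl : (fun i : Fin n => (x : ℕ → Fin k) i) = u := funext hx
  rw [← cylPt_eq_cylSet]
  constructor
  · calc c₁ * cylSup X σ f _ ≤ c₁ * (varConst X σ f n * Real.exp (birk σ f n x)) :=
          mul_le_mul_of_nonneg_left (cylSup_le_varConst_mul σ f hb hx) hc₁
      _ = varConst X σ f n * (c₁ * Real.exp (birk σ f n x)) := by ring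
      _ ≤ varConst X σ f n * (μ (cylPt X x n)).toReal :=
          mul_le_mul_of_nonneg_left (hμ x).1 (varConst_pos σ f hb n).le
  · exact (hμ x).2.trans (mul_le_mul_of_nonneg_left (exp_birk_le_cylSup σ f hb hx) hc₂)

lemma map_measure_cylSet_bounds_of_gibbs [IsFiniteMeasure μ] (τ : Fin k → Fin l) (π : X → Y)
    (hπm : Measurable π) (hπ : ∀ x, (π x : ℕ → Fin l) = τ ∘ x) {b : ℝ} (hb : ∀ x, |f x| ≤ b)
    {n : ℕ} {c₁ c₂ : ℝ} (hc₁ : 0 ≤ c₁) (hc₂ : 0 ≤ c₂)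
    (hμ : ∀ x : X, c₁ * Real.exp (birk σ f n x) ≤ (μ (cylPt X x n)).toReal ∧
      (μ (cylPt X x n)).toReal ≤ c₂ * Real.exp (birk σ f n x)) (v : Fin n → Fin l) :
    c₁ * fiberSup X σ f τ v ≤ varConst X σ f n * (μ.map π (cylSet Y v)).toReal ∧
      (μ.map π (cylSet Y v)).toReal ≤ c₂ * fiberSup X σ f τ v := by
  have hbounds := measure_cylSet_bounds_of_gibbs σ f μ hb hc₁ hc₂ hμ
  rw [map_cylSet_eq_sum τ π hπm hπ, ENNReal.toReal_sum fun u _ => measure_ne_top μ _, fiberSup,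
    Finset.mul_sum, Finset.mul_sum, Finset.mul_sum]
  exact ⟨Finset.sum_le_sum fun u _ => (hbounds u).1, Finset.sum_le_sum fun u _ => (hbounds u).2⟩

end Measure

lemma gibbs_ratio_bounds {C D M s g m : ℝ} (hC : 0 < C) (hD : 0 < D) (hM : 0 < M) (hs : 0 < s)
    (hgs : g ≤ s) (hsg : s ≤ M * g) (hlo : 1 / C * D * s ≤ M * m) (hhi : m ≤ C * D * s) :
    1 / (C * M) ≤ m / (D * g) ∧ m / (D * g) ≤ C * M := by
  have hg : 0 < g := (mul_pos_iff_of_pos_left hM).1 (hs.trans_le hsg)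
  constructor
  · rw [div_le_div_iff₀ (by positivity) (by positivity)]
    calc 1 * (D * g) ≤ D * s := by rw [one_mul]; exact mul_le_mul_of_nonneg_left hgs hD.le
      _ = C * (1 / C * D * s) := by field_simp
      _ ≤ C * (M * m) := mul_le_mul_of_nonneg_left hlo hC.le
      _ = m * (C * M) := by ring
  · rw [div_le_iff₀ (by positivity)]
    calc m ≤ C * D * s := hhi
      _ ≤ C * D * (M * g) := mul_le_mul_of_nonneg_left hsg (by positivity)
      _ = C * M * (D * g) := by ring

theorem stmt17_general {k l : ℕ}
    (X : Set (ℕ → Fin k)) (hX : IsSubshift X)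
    (Y : Set (ℕ → Fin l))
    (σX : X → X) (hσX : ∀ x : X, (σX x : ℕ → Fin k) = shiftMap (x : ℕ → Fin k))
    -- π is a one-block factor map
    (π : X → Y) (hπc : Continuous π) (hπs : Function.Surjective π)
    (hπ1 : ∃ τ : Fin k → Fin l, ∀ (x : X) (i : ℕ), (π x : ℕ → Fin l) i = τ ((x : ℕ → Fin k) i))
    (f : X → ℝ) (hf : Continuous f)
    -- μ is an invariant weak Gibbs measure for f, with constants Cn
    (μ : Measure X) (hμprob : IsProbabilityMeasure μ)
    (Cn : ℕ → ℝ) (hCn : ∀ n, 0 < Cn n)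
    (hwG : ∀ (x : X) (n : ℕ),
      1 / Cn n ≤ (μ (cylPt X x n)).toReal /
        Real.exp (-(n * seqPressure X (fun n' z => Real.exp (birk σX f n' z))) + birk σX f n x) ∧
      (μ (cylPt X x n)).toReal /
        Real.exp (-(n * seqPressure X (fun n' z => Real.exp (birk σX f n' z))) + birk σX f n x)
        ≤ Cn n) :
    seqPressure X (fun n' z => Real.exp (birk σX f n' z)) =
      seqPressure Y (fun n y => gfun X σX (fun z => ((π z : ℕ → Fin l))) f n (y : ℕ → Fin l)) ∧
    ∀ (y : Y) (n : ℕ),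
      1 / (Cn n * varConst X σX f n) ≤ ((μ.map π) (cylPt Y y n)).toReal /
        (Real.exp (-(n * seqPressure Y
            (fun n' y' => gfun X σX (fun z => ((π z : ℕ → Fin l))) f n' (y' : ℕ → Fin l)))) *
          gfun X σX (fun z => ((π z : ℕ → Fin l))) f n (y : ℕ → Fin l)) ∧
      ((μ.map π) (cylPt Y y n)).toReal /
        (Real.exp (-(n * seqPressure Y
            (fun n' y' => gfun X σX (fun z => ((π z : ℕ → Fin l))) f n' (y' : ℕ → Fin l)))) *
          gfun X σX (fun z => ((π z : ℕ → Fin l))) f n (y : ℕ → Fin l))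
        ≤ Cn n * varConst X σX f n := by
  obtain ⟨τ, hτ⟩ := hπ1
  have hπ : ∀ x, (π x : ℕ → Fin l) = τ ∘ x := fun x => funext (hτ x)
  have : Nonempty X := nonempty_of_isProbabilityMeasure μ
  obtain ⟨b, hb⟩ := exists_abs_le_of_continuous f hX.1 hf
  have hP := seqPressure_eq_seqPressure_gfun σX f τ hX.1 hσX hf π hπ
  simp only [hπ]
  rw [← hP]
  refine ⟨rfl, fun y n => ?_⟩
  set D := Real.exp (-(n * seqPressure X (fun n' z => Real.exp (birk σX f n' z))))
  obtain ⟨x, rfl⟩ := hπs y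
  let v : Fin n → Fin l := fun i => (π x : ℕ → Fin l) i
  have hg := gfun_le_fiberSup σX f τ hb (y := π x) (v := v) fun _ => rfl
  have hg' := fiberSup_le_varConst_mul_gfun σX f τ hb (y := π x) (v := v) fun _ => rfl
  have hpos := fiberSup_pos σX f τ hb (v := v) (x := x) fun i => (hτ x i).symm
  have hD : 0 < D := Real.exp_pos _
  obtain ⟨hlo, hhi⟩ := map_measure_cylSet_bounds_of_gibbs σX f μ τ π hπc.measurable hπ hb
    (c₁ := 1 / Cn n * D) (c₂ := Cn n * D) (by have := hCn n; positivity)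
    (by have := hCn n; positivity) (fun z => by
      obtain ⟨h₁, h₂⟩ := hwG z n
      rw [le_div_iff₀ (Real.exp_pos _), Real.exp_add, ← mul_assoc] at h₁
      rw [div_le_iff₀ (Real.exp_pos _), Real.exp_add, ← mul_assoc] at h₂
      exact ⟨h₁, h₂⟩) v
  rw [cylPt_eq_cylSet]
  exact gibbs_ratio_bounds (hCn n) hD (varConst_pos σX f hb n) hpos hg hg' hlo hhi

theorem stmt17 {k l : ℕ}
    (X : Set (ℕ → Fin k)) (hX : IsSubshift X)
    (hSFT : IsSFT X) (hirr : IrreducibleSubshift X)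
    (Y : Set (ℕ → Fin l)) (hY : IsSubshift Y)
    (σX : X → X) (hσX : ∀ x : X, (σX x : ℕ → Fin k) = shiftMap (x : ℕ → Fin k))
    (σY : Y → Y) (hσY : ∀ y : Y, (σY y : ℕ → Fin l) = shiftMap (y : ℕ → Fin l))
    -- π is a one-block factor map
    (π : X → Y) (hπc : Continuous π) (hπs : Function.Surjective π)
    (hπcomm : ∀ x, π (σX x) = σY (π x))
    (hπ1 : ∃ τ : Fin k → Fin l, ∀ (x : X) (i : ℕ), (π x : ℕ → Fin l) i = τ ((x : ℕ → Fin k) i))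
    (f : X → ℝ) (hf : Continuous f)
    -- μ is an invariant weak Gibbs measure for f, with constants Cn
    (μ : Measure X) (hμprob : IsProbabilityMeasure μ) (hμinv : MeasurePreserving σX μ μ)
    (Cn : ℕ → ℝ) (hCn : ∀ n, 0 < Cn n)
    (hCnlim : Tendsto (fun n : ℕ => (1 / (n : ℝ)) * Real.log (Cn n)) atTop (𝓝 0))
    (hwG : ∀ (x : X) (n : ℕ),
      1 / Cn n ≤ (μ (cylPt X x n)).toReal /
        Real.exp (-(n * seqPressure X (fun n' z => Real.exp (birk σX f n' z))) + birk σX f n x) ∧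
      (μ (cylPt X x n)).toReal /
        Real.exp (-(n * seqPressure X (fun n' z => Real.exp (birk σX f n' z))) + birk σX f n x)
        ≤ Cn n) :
    seqPressure X (fun n' z => Real.exp (birk σX f n' z)) =
      seqPressure Y (fun n y => gfun X σX (fun z => ((π z : ℕ → Fin l))) f n (y : ℕ → Fin l)) ∧
    ∀ (y : Y) (n : ℕ),
      1 / (Cn n * varConst X σX f n) ≤ ((μ.map π) (cylPt Y y n)).toReal /
        (Real.exp (-(n * seqPressure Y
            (fun n' y' => gfun X σX (fun z => ((π z : ℕ → Fin l))) f n' (y' : ℕ → Fin l)))) *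
          gfun X σX (fun z => ((π z : ℕ → Fin l))) f n (y : ℕ → Fin l)) ∧
      ((μ.map π) (cylPt Y y n)).toReal /
        (Real.exp (-(n * seqPressure Y
            (fun n' y' => gfun X σX (fun z => ((π z : ℕ → Fin l))) f n' (y' : ℕ → Fin l)))) *
          gfun X σX (fun z => ((π z : ℕ → Fin l))) f n (y : ℕ → Fin l))
        ≤ Cn n * varConst X σX f n :=
  stmt17_general X hX Y σX hσX π hπc hπs hπ1 f hf μ hμprob Cn hCn hwG
end

section
/- Let $(Y,\sigma_Y)$ be a one-sided subshift, $\{\log g_n\}$ a subadditive sequence of logarithms of continuous positive functions on $Y$, $\nu$ a $\sigma_Y$-invariant weak Gibbs measure for $\{\log g_n\}$ with constants $K_n$ ($\frac1n\log K_n\to 0$), and suppose $\nu$ is also an invariant weak Gibbs measure for some continuous $\tilde h$ on $Y$ with constants $A_n$ ($\frac1n\log A_n\to 0$). Then $\frac{1}{K_nA_n} \le g_n(y)/e^{(S_n(\tilde h - P(\tilde h) + P(\mathcal G)))(y)} \le K_n A_n$ for all $y$, and hence $\{\log g_n\}$ is asymptotically additive on $Y$ with limit function $h = \tilde h - P(\tilde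 h) + P(\mathcal G)$. -/
open Filter Topology MeasureTheory

set_option maxHeartbeats 1000000 in
theorem stmt18 {l : ℕ} (Y : Set (ℕ → Fin l)) (hY : IsSubshift Y)
    (σY : Y → Y) (hσY : ∀ y : Y, (σY y : ℕ → Fin l) = shiftMap (y : ℕ → Fin l))
    (g : ℕ → Y → ℝ) (hgc : ∀ n, Continuous (g n)) (hgpos : ∀ n y, 0 < g n y)
    (hsub : ∀ n m y, g (n + m) y ≤ g n y * g m (σY^[n] y))
    -- ν is an invariant weak Gibbs measure for {log g_n} with constants K_n
    (ν : Measure Y) (hνprob : IsProbabilityMeasure ν) (hνinv : MeasurePreserving σY ν ν)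
    (K : ℕ → ℝ) (hK : ∀ n, 0 < K n)
    (hKlim : Tendsto (fun n : ℕ => (1 / (n : ℝ)) * Real.log (K n)) atTop (𝓝 0))
    (hwGG : ∀ (y : Y) (n : ℕ),
      1 / K n ≤ (ν (cylPt Y y n)).toReal / (Real.exp (-(n * seqPressure Y g)) * g n y) ∧
      (ν (cylPt Y y n)).toReal / (Real.exp (-(n * seqPressure Y g)) * g n y) ≤ K n)
    -- ν is an invariant weak Gibbs measure for a continuous h̃ with constants A_n
    (htil : Y → ℝ) (hhtil : Continuous htil)
    (A : ℕ → ℝ) (hA : ∀ n, 0 < A n)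
    (hAlim : Tendsto (fun n : ℕ => (1 / (n : ℝ)) * Real.log (A n)) atTop (𝓝 0))
    (hwGh : ∀ (y : Y) (n : ℕ),
      1 / A n ≤ (ν (cylPt Y y n)).toReal /
        Real.exp (-(n * seqPressure Y (fun n' z => Real.exp (birk σY htil n' z))) + birk σY htil n y) ∧
      (ν (cylPt Y y n)).toReal /
        Real.exp (-(n * seqPressure Y (fun n' z => Real.exp (birk σY htil n' z))) + birk σY htil n y)
        ≤ A n) :
    (∀ (y : Y) (n : ℕ),
      1 / (K n * A n) ≤ g n y / Real.exp (birk σY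
        (fun z => htil z - seqPressure Y (fun n' z' => Real.exp (birk σY htil n' z')) +
          seqPressure Y g) n y) ∧
      g n y / Real.exp (birk σY
        (fun z => htil z - seqPressure Y (fun n' z' => Real.exp (birk σY htil n' z')) +
          seqPressure Y g) n y) ≤ K n * A n) ∧
    Tendsto (fun n : ℕ => (1 / (n : ℝ)) *
      ⨆ y : Y, |Real.log (g n y) - birk σY
        (fun z => htil z - seqPressure Y (fun n' z' => Real.exp (birk σY htil n' z')) +
          seqPressure Y g) n y|) atTop (𝓝 0) := by
  set P := seqPressure Y g with hPdef
  set Q := seqPressure Y (fun n' z => Real.exp (birk σY htil n' z)) with hQdef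
  clear_value P Q
  have hb : ∀ (n : ℕ) (y : Y),
      birk σY (fun z => htil z - Q + P) n y = birk σY htil n y + n * (P - Q) := by
    intro n y
    simp only [birk, Finset.sum_add_distrib, Finset.sum_sub_distrib,
      Finset.sum_const, Finset.card_range, nsmul_eq_mul]
    ring
  have key : ∀ (y : Y) (n : ℕ),
      1 / (K n * A n) ≤ g n y / Real.exp (birk σY (fun z => htil z - Q + P) n y) ∧
      g n y / Real.exp (birk σY (fun z => htil z - Q + P) n y) ≤ K n * A n := by
    intro y n
    obtain ⟨h1l, h1u⟩ := hwGG y n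
    obtain ⟨h2l, h2u⟩ := hwGh y n
    set S := birk σY htil n y with hS
    set G := g n y with hG
    have hGpos : (0:ℝ) < G := hgpos n y
    set N := (ν (cylPt Y y n)).toReal with hN
    set e1 := Real.exp (-(n*P)) * G with he1
    set e2 := Real.exp (-(n*Q) + S) with he2
    clear_value S G N e1 e2
    have he1pos : 0 < e1 := by rw [he1]; exact mul_pos (Real.exp_pos _) hGpos
    have he2pos : 0 < e2 := by rw [he2]; exact Real.exp_pos _
    have hNpos : 0 < N := by
      have h0 : 0 < N / e1 := lt_of_lt_of_le (one_div_pos.mpr (hK n)) h1l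
      rcases div_pos_iff.mp h0 with ⟨h, _⟩ | ⟨_, h⟩
      · exact h
      · linarith
    have hed : e1 / e2 = G / Real.exp (S + n * (P - Q)) := by
      rw [he1, he2, mul_comm, mul_div_assoc, ← Real.exp_sub, div_eq_mul_inv G,
        ← Real.exp_neg]
      congr 1
      ring
    have hrr : (N / e2) / (N / e1) = e1 / e2 := by
      field_simp
    have hr1pos : 0 < N / e1 := div_pos hNpos he1pos
    have h1l' : 1 ≤ N / e1 * K n := (div_le_iff₀ (hK n)).mp h1l
    have h2l' : 1 ≤ N / e2 * A n := (div_le_iff₀ (hA n)).mp h2l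
    have hub : (N / e2) / (N / e1) ≤ K n * A n := by
      rw [div_le_iff₀ hr1pos]
      nlinarith [hK n, hA n]
    have hlb : 1 / (K n * A n) ≤ (N / e2) / (N / e1) := by
      rw [div_le_div_iff₀ (mul_pos (hK n) (hA n)) hr1pos]
      nlinarith [hK n, hA n]
    rw [hrr, hed] at hub hlb
    rw [hb n y, ← hS]
    exact ⟨hlb, hub⟩
  refine ⟨key, ?_⟩
  by_cases hne : Nonempty Y
  · refine tendsto_of_tendsto_of_tendsto_of_le_of_le (g := fun _ => (0:ℝ))
      (h := fun n : ℕ => (1 / (n:ℝ)) * Real.log (K n) + (1 / (n:ℝ)) * Real.log (A n))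
      tendsto_const_nhds (by simpa using hKlim.add hAlim) ?_ ?_
    · intro n
      exact mul_nonneg (by positivity) (Real.iSup_nonneg fun y => abs_nonneg _)
    · intro n
      have hKA : 0 < K n * A n := mul_pos (hK n) (hA n)
      have hKA1 : 1 ≤ K n * A n := by
        obtain ⟨y0⟩ := hne
        obtain ⟨hl, hu⟩ := key y0 n
        have := hl.trans hu
        rw [div_le_iff₀ hKA] at this
        nlinarith
      have hsup : (⨆ y : Y, |Real.log (g n y) - birk σY (fun z => htil z - Q + P) n y|)
          ≤ Real.log (K n) + Real.log (A n) := by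
        refine ciSup_le fun y => ?_
        obtain ⟨hl, hu⟩ := key y n
        have hR : 0 < g n y / Real.exp (birk σY (fun z => htil z - Q + P) n y) :=
          div_pos (hgpos n y) (Real.exp_pos _)
        have hlog : Real.log (g n y / Real.exp (birk σY (fun z => htil z - Q + P) n y))
            = Real.log (g n y) - birk σY (fun z => htil z - Q + P) n y := by
          rw [Real.log_div (hgpos n y).ne' (Real.exp_ne_zero _), Real.log_exp]
        rw [← Real.log_mul (hK n).ne' (hA n).ne', ← hlog]
        rw [abs_le]
        constructor
        · have := Real.log_le_log (by positivity) hl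
          rwa [Real.log_div one_ne_zero hKA.ne', Real.log_one, zero_sub] at this
        · exact Real.log_le_log hR hu
      calc (1 / (n:ℝ)) * ⨆ y : Y, |Real.log (g n y) - birk σY (fun z => htil z - Q + P) n y|
          ≤ (1 / (n:ℝ)) * (Real.log (K n) + Real.log (A n)) :=
            mul_le_mul_of_nonneg_left hsup (by positivity)
        _ = (1 / (n:ℝ)) * Real.log (K n) + (1 / (n:ℝ)) * Real.log (A n) := by ring
  · have : IsEmpty Y := not_nonempty_iff.mp hne
    simp only [Real.iSup_of_isEmpty, mul_zero]
    exact tendsto_const_nhds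
end
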